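/- arXiv:1209.3954 — 4 statements merged into one kernel-verified Lean document; each statement's English description precedes it below -/
import Mathlib

section
/- There exist a constant c > 0 and a threshold n₀ such that for every integer n ≥ n₀ there exists a mesh M with n vertices for which the number of distinct convex polygons that respect M is at least c · 1.5028^n. -/
open scoped RealInnerProductSpace
open EuclideanGeometry

noncomputable section

/-- The Euclidean plane. -/
abbrev Pt : Type := EuclideanSpace ℝ (Fin 2)

/-- A (possibly degenerate) triangle, given by its three corners. -/
structure Tri where
  a : Pt
  b : Pt
  c : Pt

/-- The vertex set of a triangle. -/
def Tri.verts (T : Tri) : Set Pt := {T.a, T.b, T.c}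

/-- The closed triangle (as a region of the plane). -/
def Tri.carrier (T : Tri) : Set Pt := convexHull ℝ T.verts

/-- The three edges of a triangle, each as a closed segment. -/
def Tri.edgeSegs (T : Tri) : Set (Set Pt) :=
  {segment ℝ T.a T.b, segment ℝ T.b T.c, segment ℝ T.a T.c}

/-- Nondegeneracy: the three corners are not collinear. -/
def Tri.Nondeg (T : Tri) : Prop := ¬ Collinear ℝ T.verts

/-- A mesh: a finite nonempty set of nondegenerate triangles in the plane such that any two
distinct triangles have disjoint interiors and intersect in either the empty set, a common
vertex, or a complete common edge. -/
structure Mesh where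
  tris : Set Tri
  finite : tris.Finite
  nonempty : tris.Nonempty
  nondeg : ∀ T ∈ tris, T.Nondeg
  proper : ∀ T ∈ tris, ∀ T' ∈ tris, T ≠ T' →
    interior T.carrier ∩ interior T'.carrier = ∅ ∧
    (T.carrier ∩ T'.carrier = ∅ ∨
      (∃ v ∈ T.verts ∩ T'.verts, T.carrier ∩ T'.carrier = {v}) ∨
      (∃ e ∈ T.edgeSegs ∩ T'.edgeSegs, T.carrier ∩ T'.carrier = e))

/-- The vertices of a mesh. -/
def Mesh.verts (M : Mesh) : Set Pt := ⋃ T ∈ M.tris, T.verts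

/-- The edges of a mesh, as unordered pairs of vertices. -/
def Mesh.edges (M : Mesh) : Set (Sym2 Pt) :=
  ⋃ T ∈ M.tris, ({s(T.a, T.b), s(T.b, T.c), s(T.a, T.c)} : Set (Sym2 Pt))

/-- A triangle is `δ`-fat if each of its interior angles is at least `δ`. -/
def Tri.Fat (δ : ℝ) (T : Tri) : Prop :=
  δ ≤ ∠ T.b T.a T.c ∧ δ ≤ ∠ T.a T.b T.c ∧ δ ≤ ∠ T.a T.c T.b

/-- A mesh is `δ`-fat if every angle of every triangle is at least `δ`. -/
def Mesh.Fat (δ : ℝ) (M : Mesh) : Prop := ∀ T ∈ M.tris, T.Fat δ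

/-- A convex polygon respecting the mesh `M` (a "potato"): the union of a nonempty subset of
the triangles of `M` which is a convex set. -/
def Mesh.IsPotato (M : Mesh) (P : Set Pt) : Prop :=
  ∃ S, S ⊆ M.tris ∧ S.Nonempty ∧ P = ⋃ T ∈ S, T.carrier ∧ Convex ℝ P

/-- A convex outerplanar polygon respecting the mesh `M` (a "carrot"): a potato that contains
no vertex of `M` in its interior. -/
def Mesh.IsCarrot (M : Mesh) (P : Set Pt) : Prop :=
  M.IsPotato P ∧ ∀ v ∈ M.verts, v ∉ interior P

/-!
Put all vertices on the parabola `y = x²`. A binary tree `t` describes a triangulation of the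
convex polygon spanned by finitely many of its points: the root triangle has its corners at the
parameters `x < (x + y) / 2 < y`, and the two subtrees triangulate the two arcs it cuts off. Two
triangles of this triangulation always lie on the two sides of a chord of the parabola, which is
what makes it a mesh. Every subtree containing the root covers the convex hull of its vertices,
hence is a convex polygon respecting the mesh, and distinct such subtrees give distinct polygons
because every point of the parabola is an extreme point of any convex hull containing it.

Hanging `k` perfect binary trees of depth four (15 nodes, 676 rooted subtrees each) along a path
gives trees with `16 k + O(1)` nodes and at least `677 ^ k` rooted subtrees, and
`677 ^ (1 / 16) > 1.5028`.
-/

/-! ### Faces of convex hulls -/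

section Face

variable {E : Type*} [AddCommGroup E] [Module ℝ E]

theorem mem_convexHull_setOf_eq_of_le (f : E →ₗ[ℝ] ℝ) {S : Set E} {d : ℝ}
    (hS : ∀ s ∈ S, f s ≤ d) {x : E} (hx : x ∈ convexHull ℝ S) (hdx : d ≤ f x) :
    x ∈ convexHull ℝ {s ∈ S | f s = d} := by
  set F := convexHull ℝ {s ∈ S | f s = d}
  have hF : F ⊆ {y | f y = d} :=
    convexHull_min (fun s hs => hs.2) (convex_hyperplane f.isLinear d)
  -- `F` lies in the boundary of the half-space `{f ≤ d}`, so adding it to the open half-space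
  -- keeps the set convex
  have hconv : Convex ℝ ({y | f y < d} ∪ F) := by
    refine convex_iff_forall_pos.2 fun u hu v hv a b ha hb hab => ?_
    by_cases huv : u ∈ F ∧ v ∈ F
    · exact Or.inr (convex_convexHull ℝ _ huv.1 huv.2 ha.le hb.le hab)
    have hu' : f u ≤ d := hu.elim (fun h => le_of_lt h) fun h => (hF h).le
    have hv' : f v ≤ d := hv.elim (fun h => le_of_lt h) fun h => (hF h).le
    have hlt : f u < d ∨ f v < d := by
      rcases hu with hu | hu
      · exact Or.inl hu
      rcases hv with hv | hv
      · exact Or.inr hv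
      exact absurd ⟨hu, hv⟩ huv
    left
    simp only [Set.mem_ofPred_eq, map_add, map_smul, smul_eq_mul]
    calc a * f u + b * f v < a * d + b * d := by
          rcases hlt with h | h
          · linarith [mul_lt_mul_of_pos_left h ha, mul_le_mul_of_nonneg_left hv' hb.le]
          · linarith [mul_le_mul_of_nonneg_left hu' ha.le, mul_lt_mul_of_pos_left h hb]
      _ = d := by rw [← add_mul, hab, one_mul]
  have hSsub : S ⊆ {y | f y < d} ∪ F := fun s hs =>
    (hS s hs).lt_or_eq.imp id fun h => subset_convexHull ℝ _ ⟨hs, h⟩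
  exact (convexHull_min hSsub hconv hx).resolve_left (not_lt.2 hdx)

theorem convexHull_inter_convexHull_of_le_of_le (f : E →ₗ[ℝ] ℝ) {S T : Set E} {d : ℝ}
    (hS : ∀ s ∈ S, f s ≤ d) (hT : ∀ t ∈ T, d ≤ f t) (hST : ∀ s ∈ S, f s = d → s ∈ T) :
    convexHull ℝ S ∩ convexHull ℝ T = convexHull ℝ (S ∩ T) := by
  refine Set.Subset.antisymm (fun x hx => ?_)
    (Set.subset_inter (convexHull_mono Set.inter_subset_left)
      (convexHull_mono Set.inter_subset_right))
  obtain ⟨hxS, hxT⟩ := hx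
  have hdx : d ≤ f x := convexHull_min hT (convex_halfSpace_ge f.isLinear d) hxT
  exact convexHull_mono (fun s hs => Set.mem_inter hs.1 (hST s hs.1 hs.2))
    (mem_convexHull_setOf_eq_of_le f hS hxS hdx)

end Face

theorem interior_convexHull_eq_empty_of_collinear {V : Type*} [NormedAddCommGroup V]
    [NormedSpace ℝ V] [FiniteDimensional ℝ V] (hV : 1 < Module.finrank ℝ V) {s : Set V}
    (hs : Collinear ℝ s) : interior (convexHull ℝ s) = ∅ := by
  by_contra h
  have htop := interior_convexHull_nonempty_iff_affineSpan_eq_top.1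
    (Set.nonempty_iff_ne_empty.2 h)
  have hspan : vectorSpan ℝ s = ⊤ := by
    rw [← direction_affineSpan, htop, AffineSubspace.direction_top]
  have := collinear_iff_finrank_le_one.1 hs
  rw [hspan, finrank_top] at this
  omega

section Intervals

variable {α : Type*} [LinearOrder α] {A B : Set α} {x m y : α}

lemma inter_eq_singleton_of_subset_Icc (hA : A ⊆ Set.Icc x m) (hB : B ⊆ Set.Icc m y)
    (hmA : m ∈ A) (hmB : m ∈ B) : A ∩ B = {m} :=
  Set.Subset.antisymm (fun _ hs => le_antisymm (hA hs.1).2 (hB hs.2).1)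
    (Set.singleton_subset_iff.2 ⟨hmA, hmB⟩)

lemma union_inter_Icc_left_eq (hA : A ⊆ Set.Icc x m) (hB : B ⊆ Set.Icc m y) (hmA : m ∈ A) :
    (A ∪ B) ∩ Set.Icc x m = A := by
  refine Set.Subset.antisymm ?_ fun s hs => ⟨Or.inl hs, hA hs⟩
  rintro s ⟨hs | hs, hsI⟩
  · exact hs
  · rwa [le_antisymm hsI.2 (hB hs).1]

lemma union_inter_Icc_right_eq (hA : A ⊆ Set.Icc x m) (hB : B ⊆ Set.Icc m y) (hmB : m ∈ B) :
    (A ∪ B) ∩ Set.Icc m y = B := by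
  refine Set.Subset.antisymm ?_ fun s hs => ⟨Or.inr hs, hB hs⟩
  rintro s ⟨hs | hs, hsI⟩
  · rwa [le_antisymm (hA hs).2 hsI.1]
  · exact hs

end Intervals

/-! ### Convex hulls of points on the parabola -/

def parabola (t : ℝ) : Pt := !₂[t, t ^ 2]

@[simp] lemma parabola_apply_zero (t : ℝ) : parabola t 0 = t := rfl
@[simp] lemma parabola_apply_one (t : ℝ) : parabola t 1 = t ^ 2 := rfl

lemma parabola_injective : Function.Injective parabola := fun s t h => by
  simpa using congrArg (· 0) h

/-- The chord through `parabola p` and `parabola q` is the line `chordForm p q = -(p * q)`; for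
`p = q` this is the tangent at `parabola p`. -/
def chordForm (p q : ℝ) : Pt →ₗ[ℝ] ℝ :=
  EuclideanSpace.projₗ 1 - (p + q) • EuclideanSpace.projₗ 0

lemma chordForm_apply (p q : ℝ) (z : Pt) : chordForm p q z = z 1 - (p + q) * z 0 := rfl

lemma chordForm_parabola (p q t : ℝ) :
    chordForm p q (parabola t) = (t - p) * (t - q) - p * q := by
  rw [chordForm_apply, parabola_apply_zero, parabola_apply_one]
  ring

lemma chordForm_parabola_le {p q t : ℝ} (ht : t ∈ Set.Icc p q) :
    chordForm p q (parabola t) ≤ -(p * q) := by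
  rw [chordForm_parabola]; nlinarith [ht.1, ht.2]

lemma le_chordForm_parabola {p q t : ℝ} (hpq : p ≤ q) (ht : t ∉ Set.Ioo p q) :
    -(p * q) ≤ chordForm p q (parabola t) := by
  rw [Set.mem_Ioo, not_and_or, not_lt, not_lt] at ht
  rw [chordForm_parabola]
  rcases ht with ht | ht <;> nlinarith

lemma sq_le_of_mem_convexHull_parabola {I : Set ℝ} {z : Pt}
    (hz : z ∈ convexHull ℝ (parabola '' I)) : z 0 ^ 2 ≤ z 1 := by
  have hsub : parabola '' I ⊆ {w | -(z 0 * z 0) ≤ chordForm (z 0) (z 0) w} := by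
    rintro _ ⟨t, -, rfl⟩
    simp only [Set.mem_ofPred_eq, chordForm_parabola]
    nlinarith [sq_nonneg (t - z 0)]
  have := convexHull_min hsub (convex_halfSpace_ge (chordForm _ _).isLinear _) hz
  simp only [Set.mem_ofPred_eq, chordForm_apply] at this
  nlinarith

lemma convexIndependent_parabola : ConvexIndependent ℝ parabola := by
  intro S t ht
  have hS : ∀ w ∈ parabola '' S, -chordForm t t w ≤ t * t := by
    rintro _ ⟨s, -, rfl⟩
    rw [chordForm_parabola]
    nlinarith [sq_nonneg (s - t)]
  have hface := mem_convexHull_setOf_eq_of_le (-chordForm t t) hS ht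
    (le_of_eq (by rw [LinearMap.neg_apply, chordForm_parabola]; ring))
  obtain ⟨_, ⟨⟨s, hs, rfl⟩, hst⟩⟩ := convexHull_nonempty_iff.1 ⟨_, hface⟩
  rw [LinearMap.neg_apply, chordForm_parabola] at hst
  obtain rfl : s = t := by nlinarith [sq_nonneg (s - t)]
  exact hs

lemma convexHull_parabola_injective :
    Function.Injective fun S : Set ℝ => convexHull ℝ (parabola '' S) := fun S S' h =>
  Set.ext fun t => by
    rw [← convexIndependent_parabola.mem_convexHull_iff,
      ← convexIndependent_parabola.mem_convexHull_iff]
    exact iff_of_eq (congrArg (parabola t ∈ ·) h)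

lemma parabola_not_collinear {a b c : ℝ} (hab : a ≠ b) (hac : a ≠ c) (hbc : b ≠ c) :
    ¬ Collinear ℝ ({parabola a, parabola b, parabola c} : Set Pt) := by
  rw [collinear_iff_of_mem (Set.mem_insert _ _)]
  rintro ⟨v, hv⟩
  obtain ⟨r, hr⟩ := hv (parabola b) (by simp)
  obtain ⟨s, hs⟩ := hv (parabola c) (by simp)
  have hb₀ := congrArg (· 0) hr
  have hb₁ := congrArg (· 1) hr
  have hc₀ := congrArg (· 0) hs
  have hc₁ := congrArg (· 1) hs
  simp only [parabola_apply_zero, parabola_apply_one, vadd_eq_add, PiLp.add_apply,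
    PiLp.smul_apply, smul_eq_mul] at hb₀ hb₁ hc₀ hc₁
  have : (b - a) * (c - a) * (c - b) = 0 := by
    linear_combination (c ^ 2 - a ^ 2) * hb₀ + (r * v 0) * hc₁ - (b ^ 2 - a ^ 2) * hc₀ -
      (s * v 0) * hb₁
  simp [sub_eq_zero, hab, hac, hbc, eq_comm] at this

lemma mem_segment_parabola {p q : ℝ} (hpq : p < q) {z : Pt} (hz : z 0 ^ 2 ≤ z 1)
    (hline : chordForm p q z = -(p * q)) : z ∈ segment ℝ (parabola p) (parabola q) := by
  rw [chordForm_apply] at hline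
  have hp : p ≤ z 0 := by nlinarith
  have hq : z 0 ≤ q := by nlinarith
  rw [segment_eq_image']
  refine ⟨(z 0 - p) / (q - p), ⟨by positivity, (div_le_one (by linarith)).2 (by linarith)⟩, ?_⟩
  have hqp : q - p ≠ 0 := by linarith
  ext i
  fin_cases i
  · simp only [Fin.zero_eta, PiLp.add_apply, PiLp.smul_apply, PiLp.sub_apply, smul_eq_mul,
      parabola_apply_zero]
    field_simp
    ring
  · simp only [Fin.mk_one, PiLp.add_apply, PiLp.smul_apply, PiLp.sub_apply, smul_eq_mul,
      parabola_apply_one]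
    field_simp
    linear_combination (p - q) * hline

lemma exists_mem_segment_inter_chord {p q : ℝ} (hpq : p < q) {S : Set ℝ} {y z : Pt}
    (hy : y ∈ convexHull ℝ (parabola '' S)) (hz : z ∈ convexHull ℝ (parabola '' S))
    (hyd : chordForm p q y ≤ -(p * q)) (hzd : -(p * q) ≤ chordForm p q z) :
    ∃ w ∈ segment ℝ y z, w ∈ segment ℝ (parabola p) (parabola q) := by
  obtain ⟨w, hw, hwd⟩ := (convex_segment y z).isPreconnected.intermediate_value
    (left_mem_segment ℝ y z) (right_mem_segment ℝ y z)
    (chordForm p q).continuous_of_finiteDimensional.continuousOn ⟨hyd, hzd⟩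
  exact ⟨w, hw, mem_segment_parabola hpq
    (sq_le_of_mem_convexHull_parabola ((convex_convexHull ℝ _).segment_subset hy hz hw)) hwd⟩

lemma convexHull_parabola_eq_union {S : Set ℝ} {p q : ℝ} (hpq : p < q) (hp : p ∈ S)
    (hq : q ∈ S) :
    convexHull ℝ (parabola '' S) = convexHull ℝ (parabola '' (S ∩ Set.Icc p q)) ∪
      convexHull ℝ (parabola '' (S \ Set.Ioo p q)) := by
  set A := S ∩ Set.Icc p q
  set B := S \ Set.Ioo p q
  have hpA : p ∈ A := ⟨hp, Set.left_mem_Icc.2 hpq.le⟩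
  have hqA : q ∈ A := ⟨hq, Set.right_mem_Icc.2 hpq.le⟩
  have hpB : p ∈ B := ⟨hp, fun h => lt_irrefl p h.1⟩
  have hqB : q ∈ B := ⟨hq, fun h => lt_irrefl q h.2⟩
  have hAS : convexHull ℝ (parabola '' A) ⊆ convexHull ℝ (parabola '' S) :=
    convexHull_mono (Set.image_mono Set.inter_subset_left)
  have hBS : convexHull ℝ (parabola '' B) ⊆ convexHull ℝ (parabola '' S) :=
    convexHull_mono (Set.image_mono Set.sdiff_subset)
  refine Set.Subset.antisymm (fun z hz => ?_) (Set.union_subset hAS hBS)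
  have hSAB : S = A ∪ B := by
    refine Set.Subset.antisymm (fun s hs => ?_) (Set.union_subset Set.inter_subset_left
      Set.sdiff_subset)
    by_cases h : s ∈ Set.Ioo p q
    exacts [Or.inl ⟨hs, Set.Ioo_subset_Icc_self h⟩, Or.inr ⟨hs, h⟩]
  have hchord : ∀ {T : Set ℝ}, p ∈ T → q ∈ T →
      segment ℝ (parabola p) (parabola q) ⊆ convexHull ℝ (parabola '' T) := fun hpT hqT =>
    segment_subset_convexHull (Set.mem_image_of_mem _ hpT) (Set.mem_image_of_mem _ hqT)
  -- `z` lies on a segment `[u, v]` from the hull of one side of the chord to the hull of the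
  -- other; the part of it between `z` and the far end crosses the chord, and the chord lies
  -- in both hulls
  have hzS := hz
  rw [hSAB, Set.image_union, convexHull_union ⟨_, Set.mem_image_of_mem _ hpA⟩
    ⟨_, Set.mem_image_of_mem _ hpB⟩, mem_convexJoin] at hz
  obtain ⟨u, hu, v, hv, hzuv⟩ := hz
  rw [mem_segment_iff_wbtw] at hzuv
  have hud : chordForm p q u ≤ -(p * q) := convexHull_min
    (by rintro _ ⟨a, ha, rfl⟩; exact chordForm_parabola_le ha.2)
    (convex_halfSpace_le (chordForm p q).isLinear _) hu
  have hvd : -(p * q) ≤ chordForm p q v := convexHull_min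
    (by rintro _ ⟨b, hb, rfl⟩; exact le_chordForm_parabola hpq.le hb.2)
    (convex_halfSpace_ge (chordForm p q).isLinear _) hv
  rcases le_total (chordForm p q z) (-(p * q)) with hzd | hzd
  · obtain ⟨w, hwzv, hw⟩ := exists_mem_segment_inter_chord hpq hzS (hBS hv) hzd hvd
    exact Or.inl <| (convex_convexHull ℝ _).segment_subset hu (hchord hpA hqA hw)
      (hzuv.trans_right_left (mem_segment_iff_wbtw.1 hwzv)).mem_segment
  · obtain ⟨w, hwuz, hw⟩ := exists_mem_segment_inter_chord hpq (hAS hu) hzS hud hzd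
    exact Or.inr <| (convex_convexHull ℝ _).segment_subset (hchord hpB hqB hw) hv
      (hzuv.trans_left_right (mem_segment_iff_wbtw.1 hwuz)).mem_segment

lemma convexHull_parabola_union {A B : Set ℝ} {x m y : ℝ} (hxm : x < m) (hmy : m < y)
    (hA : A ⊆ Set.Icc x m) (hB : B ⊆ Set.Icc m y) (hxA : x ∈ A) (hmA : m ∈ A) (hmB : m ∈ B)
    (hyB : y ∈ B) :
    convexHull ℝ (parabola '' (A ∪ B)) = convexHull ℝ (parabola '' A) ∪
      convexHull ℝ (parabola '' B) ∪ convexHull ℝ (parabola '' {x, m, y}) := by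
  have hleft : (A ∪ B) \ Set.Ioo x m = insert x B := by
    ext s
    have := @hA s
    have := @hB s
    simp only [Set.mem_Icc, Set.mem_Ioo, Set.mem_sdiff, Set.mem_insert_iff, Set.mem_union] at *
    grind
  have hright : insert x B ∩ Set.Icc m y = B := by
    rw [Set.insert_eq]
    exact union_inter_Icc_right_eq (Set.singleton_subset_iff.2 ⟨le_rfl, hxm.le⟩) hB hmB
  have hmid : insert x B \ Set.Ioo m y = {x, m, y} := by
    ext s
    have := @hB s
    simp only [Set.mem_Icc, Set.mem_Ioo, Set.mem_sdiff, Set.mem_insert_iff,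
      Set.mem_singleton_iff] at *
    grind
  rw [convexHull_parabola_eq_union hxm (Or.inl hxA) (Or.inl hmA),
    union_inter_Icc_left_eq hA hB hmA, hleft,
    convexHull_parabola_eq_union (S := insert x B) hmy
      (Set.mem_insert_of_mem _ hmB) (Set.mem_insert_of_mem _ hyB), hright, hmid, Set.union_assoc]

/-- `A` and `B` lie on the two sides of the chord through `parabola p` and `parabola q`, and
the points of `A` on the chord belong to `B`. -/
def ChordSeparated (A B : Set ℝ) : Prop :=
  ∃ p q, p ≤ q ∧ A ⊆ Set.Icc p q ∧ (∀ b ∈ B, b ∉ Set.Ioo p q) ∧ A ∩ {p, q} ⊆ B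

lemma ChordSeparated.convexHull_inter {A B : Set ℝ} (h : ChordSeparated A B) :
    convexHull ℝ (parabola '' A) ∩ convexHull ℝ (parabola '' B) =
      convexHull ℝ (parabola '' (A ∩ B)) := by
  obtain ⟨p, q, hpq, hA, hB, hAB⟩ := h
  rw [Set.image_inter parabola_injective]
  refine convexHull_inter_convexHull_of_le_of_le (chordForm p q) (d := -(p * q))
    (by rintro _ ⟨a, ha, rfl⟩; exact chordForm_parabola_le (hA ha))
    (by rintro _ ⟨b, hb, rfl⟩; exact le_chordForm_parabola hpq (hB b hb)) ?_
  rintro _ ⟨a, ha, rfl⟩ had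
  rw [chordForm_parabola, sub_eq_neg_self, mul_eq_zero, sub_eq_zero, sub_eq_zero] at had
  exact Set.mem_image_of_mem _ (hAB ⟨ha, had⟩)

lemma ChordSeparated.exists_inter_subset_pair {A B : Set ℝ} (h : ChordSeparated A B) :
    ∃ p q : ℝ, A ∩ B ⊆ {p, q} := by
  obtain ⟨p, q, -, hA, hB, -⟩ := h
  refine ⟨p, q, fun s ⟨hsA, hsB⟩ => ?_⟩
  have := hA hsA
  have := hB s hsB
  simp only [Set.mem_Icc, Set.mem_Ioo, Set.mem_insert_iff, Set.mem_singleton_iff] at *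
  grind

lemma chordSeparated_of_subset_Icc_of_mem {A B : Set ℝ} {p q : ℝ} (hpq : p ≤ q)
    (hA : A ⊆ Set.Icc p q) (hB : ∀ b ∈ B, b ∉ Set.Ioo p q) (hp : p ∈ B) (hq : q ∈ B) :
    ChordSeparated A B :=
  ⟨p, q, hpq, hA, hB, fun _ ⟨_, h⟩ => h.elim (fun h => h ▸ hp) fun h => h ▸ hq⟩

lemma chordSeparated_of_subset_Icc_of_le {A B : Set ℝ} {p q : ℝ} (hA : A ⊆ Set.Icc p q)
    (hB : ∀ b ∈ B, b ≤ p) (hp : p ∈ B) : ChordSeparated A B := by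
  refine ⟨p, max p q + 1, by linarith [le_max_left p q], fun a ha => ?_,
    fun b hb h => (hB b hb).not_gt h.1, ?_⟩
  · exact ⟨(hA ha).1, by linarith [(hA ha).2, le_max_right p q]⟩
  · rintro a ⟨ha, rfl | rfl⟩
    · exact hp
    · linarith [(hA ha).2, le_max_right p q]

/-! ### Meshes of triangles on the parabola -/

/-- The condition imposed on two distinct triangles of a mesh. -/
def Tri.MeetsProperly (T T' : Tri) : Prop :=
  interior T.carrier ∩ interior T'.carrier = ∅ ∧
    (T.carrier ∩ T'.carrier = ∅ ∨
      (∃ v ∈ T.verts ∩ T'.verts, T.carrier ∩ T'.carrier = {v}) ∨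
      (∃ e ∈ T.edgeSegs ∩ T'.edgeSegs, T.carrier ∩ T'.carrier = e))

lemma Tri.segment_mem_edgeSegs {T : Tri} {u v : Pt} (hu : u ∈ T.verts) (hv : v ∈ T.verts)
    (huv : u ≠ v) : segment ℝ u v ∈ T.edgeSegs := by
  rcases hu with rfl | rfl | rfl <;> rcases hv with rfl | rfl | rfl <;>
    simp [Tri.edgeSegs, segment_symm] at huv ⊢

lemma Tri.meetsProperly_of_inter_eq_convexHull {T T' : Tri} {V : Set Pt} {u v : Pt}
    (hV : V ⊆ T.verts ∩ T'.verts) (huv : V ⊆ {u, v})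
    (h : T.carrier ∩ T'.carrier = convexHull ℝ V) : T.MeetsProperly T' := by
  refine ⟨?_, ?_⟩
  · rw [← interior_inter, h]
    exact interior_convexHull_eq_empty_of_collinear (by simp)
      ((collinear_pair ℝ u v).subset huv)
  rw [h]
  rcases Set.subset_pair_iff_eq.1 huv with rfl | rfl | rfl | rfl
  · exact Or.inl convexHull_empty
  · exact Or.inr (Or.inl ⟨u, hV rfl, convexHull_singleton u⟩)
  · exact Or.inr (Or.inl ⟨v, hV rfl, convexHull_singleton v⟩)
  by_cases huv' : u = v
  · subst huv'
    exact Or.inr (Or.inl ⟨u, hV (by simp), by simp⟩)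
  have hu := hV (Set.mem_insert u {v})
  have hv := hV (Set.mem_insert_of_mem u rfl)
  exact Or.inr (Or.inr ⟨segment ℝ u v, ⟨Tri.segment_mem_edgeSegs hu.1 hv.1 huv',
    Tri.segment_mem_edgeSegs hu.2 hv.2 huv'⟩, convexHull_pair u v⟩)

def cornerParams (τ : ℝ × ℝ × ℝ) : Set ℝ := {τ.1, τ.2.1, τ.2.2}

lemma cornerParams_subset_Icc {τ : ℝ × ℝ × ℝ} (h₁ : τ.1 ≤ τ.2.1) (h₂ : τ.2.1 ≤ τ.2.2) :
    cornerParams τ ⊆ Set.Icc τ.1 τ.2.2 := by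
  rintro s (rfl | rfl | rfl)
  exacts [⟨le_rfl, h₁.trans h₂⟩, ⟨h₁, h₂⟩, ⟨h₁.trans h₂, le_rfl⟩]

def parabolaTri (τ : ℝ × ℝ × ℝ) : Tri := ⟨parabola τ.1, parabola τ.2.1, parabola τ.2.2⟩

lemma parabolaTri_verts (τ : ℝ × ℝ × ℝ) :
    (parabolaTri τ).verts = parabola '' cornerParams τ := by
  simp [Tri.verts, parabolaTri, cornerParams, Set.image_insert_eq]

lemma parabolaTri_carrier (τ : ℝ × ℝ × ℝ) :
    (parabolaTri τ).carrier = convexHull ℝ (parabola '' cornerParams τ) := by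
  rw [Tri.carrier, parabolaTri_verts]

lemma parabolaTri_nondeg {τ : ℝ × ℝ × ℝ} (h₁ : τ.1 < τ.2.1) (h₂ : τ.2.1 < τ.2.2) :
    (parabolaTri τ).Nondeg :=
  parabola_not_collinear h₁.ne (h₁.trans h₂).ne h₂.ne

lemma parabolaTri_meetsProperly {τ τ' : ℝ × ℝ × ℝ}
    (h : ChordSeparated (cornerParams τ) (cornerParams τ') ∨
      ChordSeparated (cornerParams τ') (cornerParams τ)) :
    (parabolaTri τ).MeetsProperly (parabolaTri τ') := by
  have hinter : (parabolaTri τ).carrier ∩ (parabolaTri τ').carrier =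
      convexHull ℝ (parabola '' (cornerParams τ ∩ cornerParams τ')) := by
    rw [parabolaTri_carrier, parabolaTri_carrier]
    rcases h with h | h
    · exact h.convexHull_inter
    · rw [Set.inter_comm, h.convexHull_inter, Set.inter_comm]
  obtain ⟨p, q, hpq⟩ : ∃ p q : ℝ, cornerParams τ ∩ cornerParams τ' ⊆ {p, q} := by
    rcases h with h | h
    · exact h.exists_inter_subset_pair
    · rw [Set.inter_comm]; exact h.exists_inter_subset_pair
  refine Tri.meetsProperly_of_inter_eq_convexHull (u := parabola p) (v := parabola q) ?_ ?_
    hinter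
  · rw [parabolaTri_verts, parabolaTri_verts]
    exact Set.image_inter_subset _ _ _
  · exact (Set.image_mono hpq).trans (by simp [Set.image_insert_eq])

def parabolaMesh (Φ : Set (ℝ × ℝ × ℝ)) (hfin : Φ.Finite) (hne : Φ.Nonempty)
    (hord : ∀ τ ∈ Φ, τ.1 < τ.2.1 ∧ τ.2.1 < τ.2.2)
    (hsep : Φ.Pairwise fun τ τ' => ChordSeparated (cornerParams τ) (cornerParams τ') ∨
      ChordSeparated (cornerParams τ') (cornerParams τ)) : Mesh where
  tris := parabolaTri '' Φ
  finite := hfin.image _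
  nonempty := hne.image _
  nondeg := by
    rintro _ ⟨τ, hτ, rfl⟩
    exact parabolaTri_nondeg (hord τ hτ).1 (hord τ hτ).2
  proper := by
    rintro _ ⟨τ, hτ, rfl⟩ _ ⟨τ', hτ', rfl⟩ hne
    exact parabolaTri_meetsProperly (hsep hτ hτ' fun h => hne (h ▸ rfl))

lemma parabolaMesh_verts {Φ : Set (ℝ × ℝ × ℝ)} {hfin hne hord hsep} :
    (parabolaMesh Φ hfin hne hord hsep).verts = parabola '' ⋃ τ ∈ Φ, cornerParams τ := by
  simp only [Mesh.verts, parabolaMesh, Set.biUnion_image, parabolaTri_verts, Set.image_iUnion₂]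

lemma Mesh.finite_setOf_isPotato (M : Mesh) : {P | M.IsPotato P}.Finite :=
  (M.finite.finite_subsets.image fun S => ⋃ T ∈ S, T.carrier).subset <| by
    rintro P ⟨S, hS, -, rfl, -⟩
    exact ⟨S, hS, rfl⟩

/-! ### Triangulations of parabola arcs dual to binary trees -/

namespace BinaryTree

/-- The parameters of the vertices of the triangulation of the parabola arc over `[x, y]` dual
to `t`: its root triangle has corners at `x`, `(x + y) / 2`, `y`, and the two subtrees
triangulate the arcs this triangle cuts off. -/
def arcVertices : BinaryTree Unit → ℝ → ℝ → Set ℝ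
  | nil, x, y => {x, y}
  | node _ l r, x, y => l.arcVertices x ((x + y) / 2) ∪ r.arcVertices ((x + y) / 2) y

def arcTriangles : BinaryTree Unit → ℝ → ℝ → Set (ℝ × ℝ × ℝ)
  | nil, _, _ => ∅
  | node _ l r, x, y => insert (x, (x + y) / 2, y)
      (l.arcTriangles x ((x + y) / 2) ∪ r.arcTriangles ((x + y) / 2) y)

lemma left_mem_arcVertices (t : BinaryTree Unit) (x y : ℝ) : x ∈ t.arcVertices x y := by
  induction t generalizing x y with
  | nil => exact Set.mem_insert x _
  | node _ l r ihl => exact Or.inl (ihl _ _)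

lemma right_mem_arcVertices (t : BinaryTree Unit) (x y : ℝ) : y ∈ t.arcVertices x y := by
  induction t generalizing x y with
  | nil => exact Set.mem_insert_of_mem x rfl
  | node _ l r _ ihr => exact Or.inr (ihr _ _)

lemma arcVertices_subset_Icc (t : BinaryTree Unit) {x y : ℝ} (hxy : x ≤ y) :
    t.arcVertices x y ⊆ Set.Icc x y := by
  induction t generalizing x y with
  | nil => exact Set.insert_subset (Set.left_mem_Icc.2 hxy) (by simpa using hxy)
  | node _ l r ihl ihr =>
    exact Set.union_subset ((ihl (by linarith)).trans (Set.Icc_subset_Icc_right (by linarith)))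
      ((ihr (by linarith)).trans (Set.Icc_subset_Icc_left (by linarith)))

lemma arcVertices_finite (t : BinaryTree Unit) (x y : ℝ) : (t.arcVertices x y).Finite := by
  induction t generalizing x y with
  | nil => exact (Set.finite_singleton y).insert x
  | node _ l r ihl ihr => exact (ihl _ _).union (ihr _ _)

lemma ncard_arcVertices (t : BinaryTree Unit) {x y : ℝ} (hxy : x < y) :
    (t.arcVertices x y).ncard = t.numNodes + 2 := by
  induction t generalizing x y with
  | nil => exact Set.ncard_pair hxy.ne
  | node _ l r ihl ihr =>
    have hinter : l.arcVertices x ((x + y) / 2) ∩ r.arcVertices ((x + y) / 2) y =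
        {(x + y) / 2} :=
      inter_eq_singleton_of_subset_Icc (l.arcVertices_subset_Icc (by linarith))
        (r.arcVertices_subset_Icc (by linarith)) (l.right_mem_arcVertices _ _)
        (r.left_mem_arcVertices _ _)
    have := Set.ncard_union_add_ncard_inter _ _ (l.arcVertices_finite x ((x + y) / 2))
      (r.arcVertices_finite ((x + y) / 2) y)
    rw [hinter, Set.ncard_singleton, ihl (by linarith), ihr (by linarith)] at this
    rw [arcVertices, numNodes]
    omega

lemma arcVertices_node_ne_nil (a : Unit) (l r : BinaryTree Unit) {x y : ℝ} (hxy : x < y) :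
    (node a l r).arcVertices x y ≠ nil.arcVertices x y := by
  intro h
  have hm : (x + y) / 2 ∈ (node a l r).arcVertices x y := Or.inl (l.right_mem_arcVertices _ _)
  rw [h, arcVertices, Set.mem_insert_iff, Set.mem_singleton_iff] at hm
  rcases hm with hm | hm <;> linarith

lemma eq_of_arcVertices_eq {s t : BinaryTree Unit} {x y : ℝ} (hxy : x < y)
    (h : s.arcVertices x y = t.arcVertices x y) : s = t := by
  induction s generalizing t x y with
  | nil =>
    cases t with
    | nil => rfl
    | node a l r => exact absurd h.symm (arcVertices_node_ne_nil a l r hxy)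
  | node a l r ihl ihr =>
    cases t with
    | nil => exact absurd h (arcVertices_node_ne_nil a l r hxy)
    | node a' l' r' =>
      have hxm : x < (x + y) / 2 := by linarith
      have hmy : (x + y) / 2 < y := by linarith
      have hl : l.arcVertices x ((x + y) / 2) = l'.arcVertices x ((x + y) / 2) := by
        rw [← union_inter_Icc_left_eq (l.arcVertices_subset_Icc hxm.le)
            (r.arcVertices_subset_Icc hmy.le) (l.right_mem_arcVertices _ _),
          ← union_inter_Icc_left_eq (l'.arcVertices_subset_Icc hxm.le)
            (r'.arcVertices_subset_Icc hmy.le) (l'.right_mem_arcVertices _ _)]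
        exact congrArg (· ∩ Set.Icc x ((x + y) / 2)) h
      have hr : r.arcVertices ((x + y) / 2) y = r'.arcVertices ((x + y) / 2) y := by
        rw [← union_inter_Icc_right_eq (l.arcVertices_subset_Icc hxm.le)
            (r.arcVertices_subset_Icc hmy.le) (r.left_mem_arcVertices _ _),
          ← union_inter_Icc_right_eq (l'.arcVertices_subset_Icc hxm.le)
            (r'.arcVertices_subset_Icc hmy.le) (r'.left_mem_arcVertices _ _)]
        exact congrArg (· ∩ Set.Icc ((x + y) / 2) y) h
      rw [ihl hxm hl, ihr hmy hr]

lemma arcTriangles_finite (t : BinaryTree Unit) (x y : ℝ) : (t.arcTriangles x y).Finite := by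
  induction t generalizing x y with
  | nil => exact Set.finite_empty
  | node _ l r ihl ihr => exact ((ihl _ _).union (ihr _ _)).insert _

lemma arcTriangles_nonempty {t : BinaryTree Unit} (ht : t ≠ nil) (x y : ℝ) :
    (t.arcTriangles x y).Nonempty := by
  cases t with
  | nil => exact absurd rfl ht
  | node a l r => exact ⟨_, Set.mem_insert _ _⟩

lemma bounds_of_mem_arcTriangles {t : BinaryTree Unit} {x y : ℝ} (hxy : x < y)
    {τ : ℝ × ℝ × ℝ} (hτ : τ ∈ t.arcTriangles x y) :
    x ≤ τ.1 ∧ τ.1 < τ.2.1 ∧ τ.2.1 < τ.2.2 ∧ τ.2.2 ≤ y := by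
  induction t generalizing x y with
  | nil => exact absurd hτ (Set.notMem_empty τ)
  | node _ l r ihl ihr =>
    rcases hτ with rfl | hτ | hτ
    · exact ⟨le_rfl, by linarith, by linarith, le_rfl⟩
    · obtain ⟨h₁, h₂, h₃, h₄⟩ := ihl (by linarith) hτ
      exact ⟨h₁, h₂, h₃, by linarith⟩
    · obtain ⟨h₁, h₂, h₃, h₄⟩ := ihr (by linarith) hτ
      exact ⟨by linarith, h₂, h₃, h₄⟩

lemma cornerParams_subset_of_mem_arcTriangles {t : BinaryTree Unit} {x y : ℝ} (hxy : x < y)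
    {τ : ℝ × ℝ × ℝ} (hτ : τ ∈ t.arcTriangles x y) : cornerParams τ ⊆ Set.Icc x y := by
  obtain ⟨h₁, h₂, h₃, h₄⟩ := bounds_of_mem_arcTriangles hxy hτ
  exact (cornerParams_subset_Icc h₂.le h₃.le).trans (Set.Icc_subset_Icc h₁ h₄)

/-- A triangle of a subtree is separated from the root triangle by the chord of the root
triangle over the subtree's arc, and the triangles of the two subtrees are separated by a chord
from the rightmost corner of a triangle on the left. -/
lemma pairwise_chordSeparated_arcTriangles (t : BinaryTree Unit) {x y : ℝ} (hxy : x < y) :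
    (t.arcTriangles x y).Pairwise fun τ τ' => ChordSeparated (cornerParams τ) (cornerParams τ') ∨
      ChordSeparated (cornerParams τ') (cornerParams τ) := by
  induction t generalizing x y with
  | nil => exact Set.pairwise_empty _
  | node _ l r ihl ihr =>
    have hxm : x < (x + y) / 2 := by linarith
    have hmy : (x + y) / 2 < y := by linarith
    have hroot : ∀ τ ∈ l.arcTriangles x ((x + y) / 2) ∪ r.arcTriangles ((x + y) / 2) y,
        ChordSeparated (cornerParams τ) (cornerParams (x, (x + y) / 2, y)) := by
      rintro τ (hτ | hτ)
      · refine chordSeparated_of_subset_Icc_of_mem hxm.le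
          (cornerParams_subset_of_mem_arcTriangles hxm hτ) ?_ (Or.inl rfl) (Or.inr (Or.inl rfl))
        rintro b (rfl | rfl | rfl) ⟨h₁, h₂⟩ <;> linarith
      · refine chordSeparated_of_subset_Icc_of_mem hmy.le
          (cornerParams_subset_of_mem_arcTriangles hmy hτ) ?_ (Or.inr (Or.inl rfl))
          (Or.inr (Or.inr rfl))
        rintro b (rfl | rfl | rfl) ⟨h₁, h₂⟩ <;> linarith
    have hlr : ∀ τ ∈ l.arcTriangles x ((x + y) / 2), ∀ τ' ∈ r.arcTriangles ((x + y) / 2) y,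
        ChordSeparated (cornerParams τ') (cornerParams τ) := by
      intro τ hτ τ' hτ'
      obtain ⟨-, h₂, h₃, h₄⟩ := bounds_of_mem_arcTriangles hxm hτ
      refine chordSeparated_of_subset_Icc_of_le (q := y)
        ((cornerParams_subset_of_mem_arcTriangles hmy hτ').trans
          (Set.Icc_subset_Icc_left h₄)) (fun b hb => ?_) (Or.inr (Or.inr rfl))
      exact (cornerParams_subset_Icc h₂.le h₃.le hb).2
    exact Set.pairwise_insert.2 ⟨Set.pairwise_union.2 ⟨ihl hxm, ihr hmy,
      fun τ hτ τ' hτ' _ => ⟨Or.inr (hlr τ hτ τ' hτ'), Or.inl (hlr τ hτ τ' hτ')⟩⟩,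
      fun τ hτ _ => ⟨Or.inr (hroot τ hτ), Or.inl (hroot τ hτ)⟩⟩

lemma iUnion_cornerParams_arcTriangles_union (t : BinaryTree Unit) (x y : ℝ) :
    (⋃ τ ∈ t.arcTriangles x y, cornerParams τ) ∪ {x, y} = t.arcVertices x y := by
  induction t generalizing x y with
  | nil => simp [arcTriangles, arcVertices]
  | node _ l r ihl ihr =>
    rw [arcVertices, ← ihl, ← ihr, arcTriangles, Set.biUnion_insert, Set.biUnion_union]
    ext s
    simp only [cornerParams, Set.mem_union, Set.mem_insert_iff, Set.mem_singleton_iff]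
    tauto

lemma iUnion_cornerParams_arcTriangles {t : BinaryTree Unit} (ht : t ≠ nil) (x y : ℝ) :
    ⋃ τ ∈ t.arcTriangles x y, cornerParams τ = t.arcVertices x y := by
  cases t with
  | nil => exact absurd rfl ht
  | node a l r =>
    rw [← iUnion_cornerParams_arcTriangles_union, eq_comm, Set.union_eq_left]
    refine Set.insert_subset ?_ (Set.singleton_subset_iff.2 ?_) <;>
      refine Set.mem_biUnion (Set.mem_insert _ _) ?_
    exacts [Or.inl rfl, Or.inr (Or.inr rfl)]

lemma convexHull_arcVertices (t : BinaryTree Unit) {x y : ℝ} (hxy : x < y) :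
    convexHull ℝ (parabola '' t.arcVertices x y) =
      (⋃ τ ∈ t.arcTriangles x y, (parabolaTri τ).carrier) ∪
        segment ℝ (parabola x) (parabola y) := by
  induction t generalizing x y with
  | nil => simp [arcVertices, arcTriangles, Set.image_pair, convexHull_pair]
  | node _ l r ihl ihr =>
    have hxm : x < (x + y) / 2 := by linarith
    have hmy : (x + y) / 2 < y := by linarith
    rw [arcVertices, convexHull_parabola_union hxm hmy (l.arcVertices_subset_Icc hxm.le)
      (r.arcVertices_subset_Icc hmy.le) (l.left_mem_arcVertices _ _)
      (l.right_mem_arcVertices _ _) (r.left_mem_arcVertices _ _) (r.right_mem_arcVertices _ _),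
      ihl hxm, ihr hmy, arcTriangles, Set.biUnion_insert, Set.biUnion_union, parabolaTri_carrier]
    have hseg : ∀ {a b : ℝ}, a ∈ cornerParams (x, (x + y) / 2, y) →
        b ∈ cornerParams (x, (x + y) / 2, y) → segment ℝ (parabola a) (parabola b) ⊆
          convexHull ℝ (parabola '' cornerParams (x, (x + y) / 2, y)) := fun ha hb =>
      segment_subset_convexHull (Set.mem_image_of_mem _ ha) (Set.mem_image_of_mem _ hb)
    have h₁ := @hseg x ((x + y) / 2) (Or.inl rfl) (Or.inr (Or.inl rfl))
    have h₂ := @hseg ((x + y) / 2) y (Or.inr (Or.inl rfl)) (Or.inr (Or.inr rfl))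
    have h₃ := @hseg x y (Or.inl rfl) (Or.inr (Or.inr rfl))
    ext z
    have := @h₁ z
    have := @h₂ z
    have := @h₃ z
    simp only [cornerParams, Set.mem_union] at *
    tauto

lemma iUnion_carrier_arcTriangles {t : BinaryTree Unit} (ht : t ≠ nil) {x y : ℝ} (hxy : x < y) :
    ⋃ τ ∈ t.arcTriangles x y, (parabolaTri τ).carrier =
      convexHull ℝ (parabola '' t.arcVertices x y) := by
  rw [convexHull_arcVertices t hxy, eq_comm, Set.union_eq_left]
  cases t with
  | nil => exact absurd rfl ht
  | node a l r =>
    refine subset_trans ?_ (Set.subset_biUnion_of_mem (Set.mem_insert _ _))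
    rw [parabolaTri_carrier]
    exact segment_subset_convexHull (Set.mem_image_of_mem _ (Or.inl rfl))
      (Set.mem_image_of_mem _ (Or.inr (Or.inr rfl)))

def arcMesh (t : BinaryTree Unit) (ht : t ≠ nil) : Mesh :=
  parabolaMesh (t.arcTriangles 0 1) (t.arcTriangles_finite 0 1) (arcTriangles_nonempty ht 0 1)
    (fun _ hτ => (bounds_of_mem_arcTriangles one_pos hτ).2.imp_right And.left)
    (t.pairwise_chordSeparated_arcTriangles one_pos)

lemma ncard_verts_arcMesh {t : BinaryTree Unit} (ht : t ≠ nil) :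
    (t.arcMesh ht).verts.ncard = t.numNodes + 2 := by
  rw [arcMesh, parabolaMesh_verts, iUnion_cornerParams_arcTriangles ht,
    Set.ncard_image_of_injective _ parabola_injective, ncard_arcVertices t one_pos]

/-! ### Rooted subtrees and potatoes -/

/-- The subtrees of `t` that contain its root. -/
def rootedSubtrees : BinaryTree Unit → Finset (BinaryTree Unit)
  | nil => ∅
  | node _ l r => ((insert nil l.rootedSubtrees) ×ˢ (insert nil r.rootedSubtrees)).image
      fun p => node () p.1 p.2

lemma ne_nil_of_mem_rootedSubtrees {s t : BinaryTree Unit} (hs : s ∈ t.rootedSubtrees) :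
    s ≠ nil := by
  cases t with
  | nil => exact absurd hs (Finset.notMem_empty s)
  | node _ l r =>
    obtain ⟨p, -, rfl⟩ := Finset.mem_image.1 hs
    exact nofun

lemma self_mem_rootedSubtrees {t : BinaryTree Unit} (ht : t ≠ nil) : t ∈ t.rootedSubtrees := by
  induction t with
  | nil => exact absurd rfl ht
  | node a l r ihl ihr =>
    refine Finset.mem_image.2 ⟨(l, r), Finset.mem_product.2 ⟨?_, ?_⟩, rfl⟩
    · by_cases hl : l = nil
      exacts [hl ▸ Finset.mem_insert_self _ _, Finset.mem_insert_of_mem (ihl hl)]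
    · by_cases hr : r = nil
      exacts [hr ▸ Finset.mem_insert_self _ _, Finset.mem_insert_of_mem (ihr hr)]

lemma card_rootedSubtrees_node (a : Unit) (l r : BinaryTree Unit) :
    (node a l r).rootedSubtrees.card =
      (l.rootedSubtrees.card + 1) * (r.rootedSubtrees.card + 1) := by
  rw [rootedSubtrees, Finset.card_image_of_injective _ fun p q h => by simpa [Prod.ext_iff] using h,
    Finset.card_product,
    Finset.card_insert_of_notMem fun h => ne_nil_of_mem_rootedSubtrees h rfl,
    Finset.card_insert_of_notMem fun h => ne_nil_of_mem_rootedSubtrees h rfl]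

lemma arcTriangles_subset_of_mem_rootedSubtrees {s t : BinaryTree Unit}
    (hs : s ∈ t.rootedSubtrees) (x y : ℝ) : s.arcTriangles x y ⊆ t.arcTriangles x y := by
  induction t generalizing s x y with
  | nil => exact absurd hs (Finset.notMem_empty s)
  | node _ l r ihl ihr =>
    obtain ⟨⟨sl, sr⟩, hp, rfl⟩ := Finset.mem_image.1 hs
    obtain ⟨hsl, hsr⟩ := Finset.mem_product.1 hp
    refine Set.insert_subset_insert (Set.union_subset_union ?_ ?_)
    · rcases Finset.mem_insert.1 hsl with rfl | hsl
      exacts [Set.empty_subset _, ihl hsl _ _]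
    · rcases Finset.mem_insert.1 hsr with rfl | hsr
      exacts [Set.empty_subset _, ihr hsr _ _]

lemma isPotato_arcMesh {t s : BinaryTree Unit} (ht : t ≠ nil) (hs : s ∈ t.rootedSubtrees) :
    (t.arcMesh ht).IsPotato (convexHull ℝ (parabola '' s.arcVertices 0 1)) := by
  have hs' := ne_nil_of_mem_rootedSubtrees hs
  refine ⟨parabolaTri '' s.arcTriangles 0 1,
    Set.image_mono (arcTriangles_subset_of_mem_rootedSubtrees hs 0 1),
    (arcTriangles_nonempty hs' 0 1).image _, ?_, convex_convexHull ℝ _⟩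
  rw [Set.biUnion_image, iUnion_carrier_arcTriangles hs' one_pos]

lemma card_rootedSubtrees_le_ncard_isPotato {t : BinaryTree Unit} (ht : t ≠ nil) :
    t.rootedSubtrees.card ≤ {P | (t.arcMesh ht).IsPotato P}.ncard := by
  rw [← Set.ncard_coe_finset]
  refine Set.ncard_le_ncard_of_injOn _ (fun s hs => isPotato_arcMesh ht hs)
    (fun s _ s' _ h => eq_of_arcVertices_eq one_pos (convexHull_parabola_injective h))
    (Mesh.finite_setOf_isPotato _)

def perfect : ℕ → BinaryTree Unit
  | 0 => nil
  | k + 1 => node () (perfect k) (perfect k)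

lemma card_rootedSubtrees_perfect_four : (perfect 4).rootedSubtrees.card = 676 := by
  simp only [perfect, card_rootedSubtrees_node]
  rfl

def spine (u : BinaryTree Unit) : ℕ → BinaryTree Unit → BinaryTree Unit
  | 0, s => s
  | k + 1, s => node () u (spine u k s)

lemma numNodes_spine (u : BinaryTree Unit) (k : ℕ) (s : BinaryTree Unit) :
    (spine u k s).numNodes = k * (u.numNodes + 1) + s.numNodes := by
  induction k with
  | zero => simp [spine]
  | succ k ih => rw [spine, numNodes, ih]; ring

lemma spine_ne_nil (u : BinaryTree Unit) (k : ℕ) {s : BinaryTree Unit} (hs : s ≠ nil) :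
    spine u k s ≠ nil := by
  cases k with
  | zero => exact hs
  | succ k => exact nofun

lemma pow_mul_card_rootedSubtrees_le (u : BinaryTree Unit) (k : ℕ) (s : BinaryTree Unit) :
    (u.rootedSubtrees.card + 1) ^ k * s.rootedSubtrees.card ≤
      (spine u k s).rootedSubtrees.card := by
  induction k with
  | zero => simp [spine]
  | succ k ih =>
    rw [spine, card_rootedSubtrees_node, pow_succ', mul_assoc]
    exact Nat.mul_le_mul_left _ (ih.trans (Nat.le_succ _))

end BinaryTree

/-- There exist `c > 0` and `n₀` such that for every `n ≥ n₀` there is a mesh with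
`n` vertices having at least `c · 1.5028 ^ n` convex polygons respecting it. -/
theorem many_potatoes_in_general_meshes :
    ∃ c : ℝ, 0 < c ∧ ∃ n₀ : ℕ, ∀ n : ℕ, n₀ ≤ n →
      ∃ M : Mesh, M.verts.ncard = n ∧
        c * 1.5028 ^ n ≤ ({P : Set Pt | M.IsPotato P}.ncard : ℝ) := by
  refine ⟨1 / 1.5028 ^ 18, by positivity, 3, fun n hn => ?_⟩
  obtain ⟨k, r, hr, rfl⟩ : ∃ k r, r < 16 ∧ n = 16 * k + r + 3 :=
    ⟨(n - 3) / 16, (n - 3) % 16, Nat.mod_lt _ (by norm_num), by omega⟩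
  have hbase : BinaryTree.nil.spine r (BinaryTree.perfect 1) ≠ .nil :=
    BinaryTree.spine_ne_nil _ _ nofun
  have ht := BinaryTree.spine_ne_nil (BinaryTree.perfect 4) k hbase
  refine ⟨BinaryTree.arcMesh _ ht, ?_, ?_⟩
  · rw [BinaryTree.ncard_verts_arcMesh, BinaryTree.numNodes_spine, BinaryTree.numNodes_spine]
    simp only [BinaryTree.perfect, BinaryTree.numNodes]
    ring
  have hcount : 677 ^ k ≤ {P | (BinaryTree.arcMesh _ ht).IsPotato P}.ncard := calc
    677 ^ k ≤ 677 ^ k * (BinaryTree.nil.spine r (BinaryTree.perfect 1)).rootedSubtrees.card :=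
      Nat.le_mul_of_pos_right _ (Finset.card_pos.2 ⟨_, BinaryTree.self_mem_rootedSubtrees hbase⟩)
    _ ≤ _ := by
      simpa [BinaryTree.card_rootedSubtrees_perfect_four] using
        BinaryTree.pow_mul_card_rootedSubtrees_le (BinaryTree.perfect 4) k _
    _ ≤ _ := BinaryTree.card_rootedSubtrees_le_ncard_isPotato ht
  calc 1 / 1.5028 ^ 18 * (1.5028 : ℝ) ^ (16 * k + r + 3)
      ≤ 1 / 1.5028 ^ 18 * ((1.5028 ^ 16) ^ k * 1.5028 ^ 18) := by
        rw [← pow_mul, ← pow_add]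
        exact mul_le_mul_of_nonneg_left (pow_le_pow_right₀ (by norm_num) (by omega))
          (by positivity)
    _ ≤ 1 / 1.5028 ^ 18 * (677 ^ k * 1.5028 ^ 18) := by gcongr; norm_num
    _ = 677 ^ k := by field_simp
    _ ≤ _ := by exact_mod_cast hcount
end
end

section
/- For every δ ∈ (0, 2π/3] and every ρ ≥ 1 there exists a constant C = C(δ, ρ) > 0 such that for every δ-fat mesh M all of whose edges have length in the interval [1, ρ], and every line segment s of length d ≥ 0 in ℝ², the number of triangles of M that intersect s is at most C · (d + 1). -/
open scoped RealInnerProductSpace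
open EuclideanGeometry

noncomputable section

/-- Every edge of the mesh has length in the interval `[1, ρ]` (compactness, normalized so
that the shortest edge has length at least `1`). -/
def Mesh.EdgesIn (M : Mesh) (ρ : ℝ) : Prop :=
  ∀ T ∈ M.tris, dist T.a T.b ∈ Set.Icc 1 ρ ∧ dist T.b T.c ∈ Set.Icc 1 ρ ∧
    dist T.a T.c ∈ Set.Icc 1 ρ


/-! A `δ`-fat triangle whose edges have length at least `1` has two sides of length `≥ 1`
enclosing an angle `θ` with `δ ≤ θ ≤ π - δ`, so its area is at least a fixed multiple of
`sin δ`. A triangle meeting `s` has diameter at most `ρ`, so it lies within `ρ + 1` of one of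
`⌈d⌉ + 2` evenly spaced points of `s`. Since the triangles have disjoint interiors, comparing
areas bounds their number by `(⌈d⌉ + 2)` times the area of a disc of radius `ρ + 1`, divided by
the area bound. -/

open MeasureTheory Metric
open scoped Pointwise ENNReal

def refTri : Set Pt := convexHull ℝ (insert 0 (Set.range (EuclideanSpace.basisFun (Fin 2) ℝ)))

theorem volume_refTri_pos : 0 < volume refTri := by
  refine Measure.measure_pos_of_nonempty_interior _
    (interior_convexHull_nonempty_iff_affineSpan_eq_top.2 ?_)
  rw [AffineSubspace.affineSpan_eq_top_iff_vectorSpan_eq_top_of_nonempty ℝ _ _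
      (Set.insert_nonempty _ _), vectorSpan_eq_span_vsub_set_right ℝ (Set.mem_insert 0 _)]
  simpa using (EuclideanSpace.basisFun (Fin 2) ℝ).toBasis.span_eq

theorem volume_refTri_lt_top : volume refTri < ⊤ :=
  (((Set.finite_range _).insert 0).isCompact_convexHull (𝕜 := ℝ)).measure_lt_top

theorem volume_convexHull_triple (a b c : Pt) :
    volume (convexHull ℝ {a, b, c}) =
      ENNReal.ofReal |(b - a) 0 * (c - a) 1 - (c - a) 0 * (b - a) 1| * volume refTri := by
  set e := (EuclideanSpace.basisFun (Fin 2) ℝ).toBasis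
  set f := e.constr ℝ ![b - a, c - a]
  have hdet : LinearMap.det f = (b - a) 0 * (c - a) 1 - (c - a) 0 * (b - a) 1 := by
    rw [← LinearMap.det_toMatrix e, Matrix.det_fin_two]
    simp [e, f, LinearMap.toMatrix_apply]
  have hbasis : f ∘ EuclideanSpace.basisFun (Fin 2) ℝ = ![b - a, c - a] :=
    funext (e.constr_basis ℝ _)
  have himage : convexHull ℝ {a, b, c} = a +ᵥ f '' refTri := by
    rw [refTri, f.image_convexHull, ← convexHull_vadd, Set.image_insert_eq, ← Set.range_comp,
      hbasis, Matrix.range_cons_cons_empty, map_zero]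
    simp [Set.vadd_set_insert]
  rw [himage, measure_vadd, Measure.addHaar_image_linearMap, hdet]

theorem abs_det_eq_sin_angle_mul_norm_mul_norm (u v : Pt) :
    |u 0 * v 1 - v 0 * u 1| = Real.sin (InnerProductGeometry.angle u v) * (‖u‖ * ‖v‖) := by
  rw [InnerProductGeometry.sin_angle_mul_norm_mul_norm, ← Real.sqrt_sq_eq_abs]
  congr 1
  simp only [PiLp.inner_apply, RCLike.inner_apply, Fin.sum_univ_two, conj_trivial]
  ring

theorem Real.sin_le_sin_of_le_of_le_pi_sub {x y : ℝ} (hx : 0 ≤ x) (hxy : x ≤ y)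
    (hy : y ≤ Real.pi - x) : sin x ≤ sin y := by
  rcases le_total y (Real.pi / 2) with h | h
  · exact sin_le_sin_of_le_of_le_pi_div_two (by linarith [pi_pos]) h hxy
  · rw [← sin_pi_sub y]
    exact sin_le_sin_of_le_of_le_pi_div_two (by linarith [pi_pos]) (by linarith) (by linarith)

theorem Tri.Fat.sin_le_sin_angle {δ : ℝ} {T : Tri} (hT : T.Fat δ) (hδ : 0 ≤ δ)
    (hab : T.a ≠ T.b) : Real.sin δ ≤ Real.sin (∠ T.b T.a T.c) := by
  obtain ⟨hA, hB, hC⟩ := hT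
  have hsum := angle_add_angle_add_angle_eq_pi T.c hab.symm
  rw [angle_comm T.b T.c T.a, angle_comm T.c T.a T.b] at hsum
  exact Real.sin_le_sin_of_le_of_le_pi_sub hδ hA (by linarith)

theorem Tri.Fat.le_volume_carrier {δ : ℝ} {T : Tri} (hT : T.Fat δ) (hδ : 0 ≤ δ)
    (hab : 1 ≤ dist T.a T.b) (hac : 1 ≤ dist T.a T.c) :
    ENNReal.ofReal (Real.sin δ) * volume refTri ≤ volume T.carrier := by
  rw [Tri.carrier, Tri.verts, volume_convexHull_triple, abs_det_eq_sin_angle_mul_norm_mul_norm,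
    ← dist_eq_norm, ← dist_eq_norm, dist_comm T.b, dist_comm T.c]
  have hsin := hT.sin_le_sin_angle hδ (dist_pos.1 (by linarith))
  gcongr
  exact hsin.trans <| le_mul_of_one_le_right
    (Real.sin_nonneg_of_nonneg_of_le_pi (angle_nonneg _ _ _) (angle_le_pi _ _ _))
    (one_le_mul_of_one_le_of_one_le hab hac)

theorem Tri.dist_le_of_mem_carrier {T : Tri} {ρ : ℝ} (hab : dist T.a T.b ≤ ρ)
    (hbc : dist T.b T.c ≤ ρ) (hac : dist T.a T.c ≤ ρ) {p q : Pt} (hp : p ∈ T.carrier)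
    (hq : q ∈ T.carrier) : dist p q ≤ ρ := by
  obtain ⟨p', hp', q', hq', hpq⟩ := convexHull_exists_dist_ge2 hp hq
  refine hpq.trans ?_
  have hρ : 0 ≤ ρ := dist_nonneg.trans hab
  simp only [Tri.verts, Set.mem_insert_iff, Set.mem_singleton_iff] at hp' hq'
  rcases hp' with rfl | rfl | rfl <;> rcases hq' with rfl | rfl | rfl <;>
    simp only [dist_self, dist_comm T.b T.a, dist_comm T.c T.a, dist_comm T.c T.b, hab, hbc, hac,
      hρ]

theorem exists_dist_lineMap_le_one {E : Type*} [NormedAddCommGroup E] [NormedSpace ℝ E]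
    {x y p : E} (hp : p ∈ segment ℝ x y) {n : ℕ} (hn : 0 < n) (hxy : dist x y ≤ n) :
    ∃ i ∈ Finset.range (n + 1), dist p (AffineMap.lineMap x y ((i : ℝ) / n)) ≤ 1 := by
  rw [segment_eq_image_lineMap] at hp
  obtain ⟨t, ⟨ht0, ht1⟩, rfl⟩ := hp
  have hn' : (0 : ℝ) < n := Nat.cast_pos.2 hn
  set k := ⌊t * n⌋₊
  have hk : (k : ℝ) ≤ t * n := Nat.floor_le (by positivity)
  have hk' : t * n < k + 1 := Nat.lt_floor_add_one _
  refine ⟨k, Finset.mem_range_succ_iff.2 (Nat.floor_le_of_le (by nlinarith)), ?_⟩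
  have hdist : dist t (k / n : ℝ) * n = |t * n - k| := by
    rw [Real.dist_eq, show t * n - k = (t - k / n) * n by field_simp, abs_mul, abs_of_pos hn']
  calc _ = dist t (k / n : ℝ) * dist x y := dist_lineMap_lineMap _ _ _ _
    _ ≤ dist t (k / n : ℝ) * n := by gcongr
    _ ≤ 1 := by rw [hdist, abs_le]; constructor <;> linarith

theorem Set.Finite.ncard_mul_le_measure {α ι : Type*} [MeasurableSpace α] {μ : Measure α}
    {s : Set ι} (hs : s.Finite) {f : ι → Set α} (hdisj : s.PairwiseDisjoint f)
    (hmeas : ∀ i ∈ s, MeasurableSet (f i)) {c : ℝ≥0∞} (hc : ∀ i ∈ s, c ≤ μ (f i)) {U : Set α}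
    (hU : ∀ i ∈ s, f i ⊆ U) : s.ncard * c ≤ μ U := by
  obtain ⟨F, rfl⟩ := hs.exists_finset_coe
  calc (F : Set ι).ncard * c = ∑ _i ∈ F, c := by simp
    _ ≤ ∑ i ∈ F, μ (f i) := Finset.sum_le_sum hc
    _ = μ (⋃ i ∈ F, f i) := (measure_biUnion_finset hdisj hmeas).symm
    _ ≤ μ U := measure_mono (Set.iUnion₂_subset hU)

theorem Tri.carrier_subset_iUnion_closedBall {T : Tri} {ρ : ℝ} (hab : dist T.a T.b ≤ ρ)
    (hbc : dist T.b T.c ≤ ρ) (hac : dist T.a T.c ≤ ρ) {x y : Pt}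
    (hT : (T.carrier ∩ segment ℝ x y).Nonempty) {n : ℕ} (hn : 0 < n) (hxy : dist x y ≤ n) :
    T.carrier ⊆
      ⋃ i ∈ Finset.range (n + 1), closedBall (AffineMap.lineMap x y ((i : ℝ) / n)) (ρ + 1) := by
  obtain ⟨p, hpT, hps⟩ := hT
  obtain ⟨i, hi, hpi⟩ := exists_dist_lineMap_le_one hps hn hxy
  intro q hq
  exact Set.mem_biUnion hi <| (dist_triangle _ _ _).trans
    (add_le_add (T.dist_le_of_mem_carrier hab hbc hac hq hpT) hpi)

theorem Tri.volume_interior_carrier (T : Tri) : volume (interior T.carrier) = volume T.carrier :=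
  measure_interior_of_null_frontier ((convex_convexHull ℝ T.verts).addHaar_frontier volume)

theorem Mesh.pairwiseDisjoint_interior_carrier (M : Mesh) :
    M.tris.PairwiseDisjoint fun T ↦ interior T.carrier :=
  fun T hT T' hT' hne ↦ Set.disjoint_iff_inter_eq_empty.2 (M.proper T hT T' hT' hne).1

theorem Mesh.ncard_inter_segment_mul_le {M : Mesh} {δ ρ : ℝ} (hfat : M.Fat δ) (hδ : 0 ≤ δ)
    (hedges : M.EdgesIn ρ) {x y : Pt} {n : ℕ} (hn : 0 < n) (hxy : dist x y ≤ n) :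
    {T ∈ M.tris | (T.carrier ∩ segment ℝ x y).Nonempty}.ncard *
        (ENNReal.ofReal (Real.sin δ) * volume refTri) ≤
      (n + 1 : ℕ) * volume (closedBall (0 : Pt) (ρ + 1)) := by
  set z : ℕ → Pt := fun i ↦ AffineMap.lineMap x y ((i : ℝ) / n)
  calc _ ≤ volume (⋃ i ∈ Finset.range (n + 1), closedBall (z i) (ρ + 1)) := by
        refine (M.finite.subset (Set.sep_subset _ _)).ncard_mul_le_measure
          (M.pairwiseDisjoint_interior_carrier.subset (Set.sep_subset _ _))
          (fun _ _ ↦ isOpen_interior.measurableSet) ?_ ?_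
        · rintro T ⟨hTM, -⟩
          obtain ⟨⟨hab, -⟩, -, ⟨hac, -⟩⟩ := hedges T hTM
          rw [T.volume_interior_carrier]
          exact (hfat T hTM).le_volume_carrier hδ hab hac
        · rintro T ⟨hTM, hT⟩
          obtain ⟨⟨-, hab⟩, ⟨-, hbc⟩, ⟨-, hac⟩⟩ := hedges T hTM
          exact interior_subset.trans (T.carrier_subset_iUnion_closedBall hab hbc hac hT hn hxy)
    _ ≤ ∑ i ∈ Finset.range (n + 1), volume (closedBall (z i) (ρ + 1)) :=
        measure_biUnion_finset_le _ _
    _ = (n + 1 : ℕ) * volume (closedBall (0 : Pt) (ρ + 1)) := by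
        simp [Measure.addHaar_closedBall_center]

/-- For every `δ ∈ (0, 2π/3]` and `ρ ≥ 1` there is `C > 0` such that in any
`δ`-fat mesh with all edge lengths in `[1, ρ]`, any segment of length `d` intersects at most
`C · (d + 1)` triangles of the mesh. -/
theorem segment_intersects_few_triangles (δ : ℝ) (hδ : δ ∈ Set.Ioc 0 (2 * Real.pi / 3))
    (ρ : ℝ) (hρ : 1 ≤ ρ) :
    ∃ C : ℝ, 0 < C ∧ ∀ M : Mesh, M.Fat δ → M.EdgesIn ρ → ∀ x y : Pt,
      ({T ∈ M.tris | (T.carrier ∩ segment ℝ x y).Nonempty}.ncard : ℝ) ≤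
        C * (dist x y + 1) := by
  obtain ⟨hδ0, hδπ⟩ := hδ
  have hsin : 0 < Real.sin δ := Real.sin_pos_of_pos_of_lt_pi hδ0 (by linarith [Real.pi_pos])
  have hT : 0 < (volume refTri).toReal :=
    ENNReal.toReal_pos volume_refTri_pos.ne' volume_refTri_lt_top.ne
  have hB : 0 < (volume (closedBall (0 : Pt) (ρ + 1))).toReal :=
    ENNReal.toReal_pos (measure_closedBall_pos _ _ (by linarith)).ne' measure_closedBall_lt_top.ne
  refine ⟨3 * (volume (closedBall (0 : Pt) (ρ + 1))).toReal /
    (Real.sin δ * (volume refTri).toReal), by positivity, fun M hfat hedges x y ↦ ?_⟩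
  have hcount := ENNReal.toReal_mono
    (ENNReal.mul_ne_top (ENNReal.natCast_ne_top _) measure_closedBall_lt_top.ne) <|
    M.ncard_inter_segment_mul_le hfat hδ0.le hedges (n := ⌈dist x y⌉₊ + 1) (Nat.succ_pos _)
      (by push_cast; linarith [Nat.le_ceil (dist x y)])
  simp only [ENNReal.toReal_mul, ENNReal.toReal_natCast, ENNReal.toReal_ofReal hsin.le] at hcount
  have hn : ((⌈dist x y⌉₊ + 1 + 1 : ℕ) : ℝ) ≤ 3 * (dist x y + 1) := by
    push_cast
    linarith [Nat.ceil_lt_add_one (dist_nonneg (x := x) (y := y)), dist_nonneg (x := x) (y := y)]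
  rw [div_mul_eq_mul_div, le_div_iff₀ (by positivity)]
  exact hcount.trans ((mul_le_mul_of_nonneg_right hn hB.le).trans_eq (by ring))
end
end

section
/- For every δ ∈ (0, 2π/3], ρ ≥ 1 and γ ≥ 1 there exists a constant D = D(δ, ρ, γ) > 0 such that for every δ-fat mesh M all of whose edges have length in [1, ρ], every γ-fat convex outerplanar polygon (carrot) respecting M has diameter at most D. -/
open scoped RealInnerProductSpace
open EuclideanGeometry

noncomputable section

/-- A set `P` is `γ`-fat if the radius of some closed disk containing `P` (hence of the
smallest such disk) is at most `γ` times the radius of some closed disk contained in `P`. -/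
def GammaFat (γ : ℝ) (P : Set Pt) : Prop :=
  ∃ c₁ r₁ c₂ r₂ : _, P ⊆ Metric.closedBall c₁ r₁ ∧ Metric.closedBall c₂ r₂ ⊆ P ∧
    0 ≤ r₂ ∧ r₁ ≤ γ * r₂

/-!
The disk inscribed in a carrot has its centre in some triangle `T` of the carrot, and the
corner of `T` is a mesh vertex, hence not an interior point of the carrot, hence not inside the
open inscribed disk. So the inradius is at most the edge bound `ρ`, and `γ`-fatness bounds the
circumradius, and with it the diameter, by `γ ρ`.
-/

open Metric

lemma Tri.carrier_subset_closedBall {T : Tri} {r : ℝ} (hab : dist T.a T.b ≤ r)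
    (hac : dist T.a T.c ≤ r) : T.carrier ⊆ closedBall T.a r := by
  refine convexHull_min ?_ (convex_closedBall _ _)
  rintro x (rfl | rfl | rfl)
  · exact mem_closedBall_self (dist_nonneg.trans hab)
  · rwa [mem_closedBall, dist_comm]
  · rwa [mem_closedBall, dist_comm]

lemma le_dist_of_closedBall_subset_of_notMem_interior {α : Type*} [PseudoMetricSpace α]
    {s : Set α} {c v : α} {r : ℝ} (hs : closedBall c r ⊆ s) (hv : v ∉ interior s) :
    r ≤ dist v c := by
  have hball : ball c r ⊆ interior s :=
    interior_maximal (ball_subset_closedBall.trans hs) isOpen_ball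
  simpa [mem_ball] using fun h => hv (hball h)

lemma Mesh.IsCarrot.inradius_le {M : Mesh} {P : Set Pt} {ρ r : ℝ} {c : Pt}
    (hC : M.IsCarrot P) (hE : M.EdgesIn ρ) (hin : closedBall c r ⊆ P) (hr : 0 ≤ r) :
    r ≤ ρ := by
  obtain ⟨⟨S, hSM, -, rfl, -⟩, hvert⟩ := hC
  obtain ⟨T, hT, hcT⟩ := Set.mem_iUnion₂.mp (hin (mem_closedBall_self hr))
  obtain ⟨hab, -, hac⟩ := hE T (hSM hT)
  have hcorner : T.a ∈ M.verts := Set.mem_biUnion (hSM hT) (by simp [Tri.verts])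
  calc r ≤ dist T.a c := le_dist_of_closedBall_subset_of_notMem_interior hin (hvert _ hcorner)
    _ = dist c T.a := dist_comm _ _
    _ ≤ ρ := Tri.carrier_subset_closedBall hab.2 hac.2 hcT

lemma GammaFat.diam_le {γ R : ℝ} {P : Set Pt} (hP : GammaFat γ P) (hγ : 0 ≤ γ)
    (hin : ∀ c r, closedBall c r ⊆ P → 0 ≤ r → r ≤ R) : diam P ≤ 2 * γ * R := by
  obtain ⟨c₁, r₁, c₂, r₂, hout, hball, hr₂, hr₁⟩ := hP
  have hr₂R : r₂ ≤ R := hin c₂ r₂ hball hr₂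
  -- `r₁` may be negative (then `P = ∅`), so pass to `max r₁ 0`.
  have hmax : max r₁ 0 ≤ γ * R :=
    max_le (hr₁.trans (mul_le_mul_of_nonneg_left hr₂R hγ))
      (mul_nonneg hγ (hr₂.trans hr₂R))
  calc diam P ≤ 2 * max r₁ 0 :=
        diam_le_of_subset_closedBall (le_max_right _ _)
          (hout.trans (closedBall_subset_closedBall (le_max_left _ _)))
    _ ≤ 2 * γ * R := by linarith

theorem fat_carrot_diameter_bound_general (δ : ℝ)
    (ρ : ℝ) (hρ : 1 ≤ ρ) (γ : ℝ) (hγ : 1 ≤ γ) :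
    ∃ D : ℝ, 0 < D ∧ ∀ M : Mesh, M.Fat δ → M.EdgesIn ρ →
      ∀ P : Set Pt, M.IsCarrot P → GammaFat γ P → Metric.diam P ≤ D := by
  refine ⟨2 * γ * ρ, by positivity, fun M _ hE P hC hG => ?_⟩
  exact hG.diam_le (by linarith) fun _ _ hin hr => hC.inradius_le hE hin hr

/-- For every `δ ∈ (0, 2π/3]`, `ρ ≥ 1` and `γ ≥ 1` there is `D > 0` such that
every `γ`-fat carrot respecting a `δ`-fat mesh with all edge lengths in `[1, ρ]` has diameter
at most `D`. -/
theorem fat_carrot_diameter_bound (δ : ℝ) (hδ : δ ∈ Set.Ioc 0 (2 * Real.pi / 3))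
    (ρ : ℝ) (hρ : 1 ≤ ρ) (γ : ℝ) (hγ : 1 ≤ γ) :
    ∃ D : ℝ, 0 < D ∧ ∀ M : Mesh, M.Fat δ → M.EdgesIn ρ →
      ∀ P : Set Pt, M.IsCarrot P → GammaFat γ P → Metric.diam P ≤ D :=
  fat_carrot_diameter_bound_general δ ρ hρ γ hγ
end
end

section
/- There exist constants δ ∈ (0, 2π/3], ρ ≥ 1, c > 0 and a threshold n₀ such that for every integer n ≥ n₀ there exists a δ-fat mesh M with n vertices, all of whose edges have length in [1, ρ], for which the number of distinct convex outerplanar polygons (carrots) that respect M is at least c · n². -/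
open scoped RealInnerProductSpace
open EuclideanGeometry

noncomputable section

/-!
Cut each unit square `[k, k + 1] × [0, 1]` along its diagonal into a lower and an upper right
isosceles triangle (angles `π/4, π/2, π/4`, sides `1, 1, √2`). Ordered from left to right (in
each square the upper triangle first), the first `t` of these triangles form a mesh with `t + 2`
vertices, all on the lines `y = 0` and `y = 1`.
Hence every rectangle `[k, m + 1] × [0, 1]` made of whole squares is a carrot, and there are
quadratically many of them.
-/

def pt (x y : ℝ) : Pt := !₂[x, y]

@[simp] lemma pt_apply_zero (x y : ℝ) : pt x y 0 = x := rfl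

@[simp] lemma pt_apply_one (x y : ℝ) : pt x y 1 = y := rfl

lemma eq_pt_iff {p : Pt} {x y : ℝ} : p = pt x y ↔ p 0 = x ∧ p 1 = y := by
  refine ⟨by rintro rfl; simp, fun ⟨h0, h1⟩ => ?_⟩
  ext i
  fin_cases i <;> simp [h0, h1]

@[simp] lemma pt_inj {x y x' y' : ℝ} : pt x y = pt x' y' ↔ x = x' ∧ y = y' := by
  simp [eq_pt_iff]

@[simp] lemma pt_eq_zero {x y : ℝ} : pt x y = 0 ↔ x = 0 ∧ y = 0 := by
  rw [show (0 : Pt) = pt 0 0 from (eq_pt_iff.2 ⟨rfl, rfl⟩), pt_inj]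

@[simp] lemma pt_add (x y x' y' : ℝ) : pt x y + pt x' y' = pt (x + x') (y + y') := by
  simp [eq_pt_iff]

@[simp] lemma pt_sub (x y x' y' : ℝ) : pt x y - pt x' y' = pt (x - x') (y - y') := by
  simp [eq_pt_iff]

@[simp] lemma smul_pt (c x y : ℝ) : c • pt x y = pt (c * x) (c * y) := by
  simp [eq_pt_iff]

@[simp] lemma inner_pt_left (x y : ℝ) (p : Pt) : ⟪pt x y, p⟫ = x * p 0 + y * p 1 := by
  simp [PiLp.inner_apply, Fin.sum_univ_two, mul_comm]

lemma norm_pt_one_zero : ‖pt 1 0‖ = 1 := by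
  simp [EuclideanSpace.norm_eq, Fin.sum_univ_two]

lemma norm_pt_zero_one : ‖pt 0 1‖ = 1 := by
  simp [EuclideanSpace.norm_eq, Fin.sum_univ_two]

section ConvexGeometry

variable {E : Type*}

theorem convexHull_triple_eq {𝕜 : Type*} [Field 𝕜] [LinearOrder 𝕜] [IsStrictOrderedRing 𝕜]
    [AddCommGroup E] [Module 𝕜 E] {a b c : E} {S : Set E}
    (hS : Convex 𝕜 S) (ha : a ∈ S) (hb : b ∈ S) (hc : c ∈ S)
    (hbary : ∀ p ∈ S, ∃ α β γ : 𝕜, 0 ≤ α ∧ 0 ≤ β ∧ 0 ≤ γ ∧ α + β + γ = 1 ∧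
      α • a + β • b + γ • c = p) :
    convexHull 𝕜 {a, b, c} = S := by
  refine (convexHull_min (Set.insert_subset ha (Set.insert_subset hb
    (Set.singleton_subset_iff.2 hc))) hS).antisymm fun p hp => ?_
  obtain ⟨α, β, γ, hα, hβ, hγ, hsum, rfl⟩ := hbary p hp
  have := (convex_convexHull 𝕜 ({a, b, c} : Set E)).sum_mem (t := Finset.univ)
    (w := ![α, β, γ]) (z := ![a, b, c]) (by intro i _; fin_cases i <;> assumption)
    (by simpa [Fin.sum_univ_three] using hsum)
    (by intro i _; apply subset_convexHull; fin_cases i <;> simp)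
  simpa [Fin.sum_univ_three, add_assoc] using this

variable [NormedAddCommGroup E] [InnerProductSpace ℝ E]

theorem interior_subset_setOf_inner_lt {w : E} (hw : w ≠ 0) {s : Set E} {c : ℝ}
    (hs : ∀ p ∈ s, ⟪w, p⟫ ≤ c) : interior s ⊆ {p | ⟪w, p⟫ < c} := by
  have hf : innerSL ℝ w ≠ 0 := fun h => hw (by simpa using congrArg (· w) h)
  have himage : innerSL ℝ w '' interior s ⊆ interior (Set.Iic c) :=
    interior_maximal (Set.image_subset_iff.2 fun p hp => hs p (interior_subset hp))
      ((innerSL ℝ w).isOpenMap_of_ne_zero hf _ isOpen_interior)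
  intro p hp
  simpa using himage ⟨p, hp, rfl⟩

theorem interior_inter_interior_eq_empty_of_inner_le {w : E} (hw : w ≠ 0) {s t : Set E} {c : ℝ}
    (hs : ∀ p ∈ s, ⟪w, p⟫ ≤ c) (ht : ∀ p ∈ t, c ≤ ⟪w, p⟫) :
    interior s ∩ interior t = ∅ := by
  refine Set.eq_empty_of_forall_notMem fun p ⟨hps, hpt⟩ => ?_
  have h₁ : ⟪w, p⟫ < c := interior_subset_setOf_inner_lt hw hs hps
  have h₂ : ⟪-w, p⟫ < -c := interior_subset_setOf_inner_lt (neg_ne_zero.2 hw)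
    (fun q hq => by simpa [inner_neg_left] using ht q hq) hpt
  rw [inner_neg_left] at h₂
  linarith

end ConvexGeometry

theorem InnerProductGeometry.angle_add_eq_pi_div_four {V : Type*} [NormedAddCommGroup V]
    [InnerProductSpace ℝ V] {x y : V} (hxy : ⟪x, y⟫ = 0) (hx : x ≠ 0) (h : ‖x‖ = ‖y‖) :
    angle x (x + y) = Real.pi / 4 := by
  rw [angle_add_eq_arctan_of_inner_eq_zero hxy hx, ← h, div_self (norm_ne_zero_iff.2 hx),
    Real.arctan_one]

section RightTri

def rightTri (a u v : Pt) : Tri := ⟨a, a + u, a + u + v⟩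

variable {a u v : Pt}

lemma rightTri_angles (hu : ‖u‖ = 1) (hv : ‖v‖ = 1) (huv : ⟪u, v⟫ = 0) :
    ∠ (a + u) a (a + u + v) = Real.pi / 4 ∧ ∠ a (a + u) (a + u + v) = Real.pi / 2 ∧
      ∠ a (a + u + v) (a + u) = Real.pi / 4 := by
  have hu0 : u ≠ 0 := norm_ne_zero_iff.1 (by rw [hu]; exact one_ne_zero)
  have hv0 : v ≠ 0 := norm_ne_zero_iff.1 (by rw [hv]; exact one_ne_zero)
  refine ⟨?_, ?_, ?_⟩
  · simpa [EuclideanGeometry.angle, add_assoc] using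
      InnerProductGeometry.angle_add_eq_pi_div_four huv hu0 (hu.trans hv.symm)
  · rw [EuclideanGeometry.angle, ← InnerProductGeometry.inner_eq_zero_iff_angle_eq_pi_div_two]
    simp [huv]
  · have := InnerProductGeometry.angle_add_eq_pi_div_four (x := v) (y := u)
      (by rwa [real_inner_comm]) hv0 (hv.trans hu.symm)
    rw [EuclideanGeometry.angle, vsub_eq_sub, vsub_eq_sub,
      show a - (a + u + v) = -(u + v) by abel, show a + u - (a + u + v) = -v by abel,
      InnerProductGeometry.angle_neg_neg, InnerProductGeometry.angle_comm, add_comm, this]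

lemma rightTri_fat (hu : ‖u‖ = 1) (hv : ‖v‖ = 1) (huv : ⟪u, v⟫ = 0) :
    (rightTri a u v).Fat (Real.pi / 4) := by
  obtain ⟨h₁, h₂, h₃⟩ := rightTri_angles (a := a) hu hv huv
  refine ⟨h₁.ge, ?_, h₃.ge⟩
  change _ ≤ ∠ a (a + u) (a + u + v)
  rw [h₂]
  linarith [Real.pi_pos]

lemma rightTri_nondeg (hu : ‖u‖ = 1) (hv : ‖v‖ = 1) (huv : ⟪u, v⟫ = 0) :
    (rightTri a u v).Nondeg := by
  have hright := (rightTri_angles (a := a) hu hv huv).2.1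
  rw [Tri.Nondeg, Tri.verts, collinear_iff_eq_or_eq_or_angle_eq_zero_or_angle_eq_pi]
  simp only [rightTri, hright]
  rintro (h | h | h | h)
  · simp [left_eq_add.1 h] at hu
  · simp [add_eq_left.1 h] at hv
  · linarith [Real.pi_pos]
  · linarith [Real.pi_pos]

lemma rightTri_dist (hu : ‖u‖ = 1) (hv : ‖v‖ = 1) (huv : ⟪u, v⟫ = 0) :
    let T := rightTri a u v
    dist T.a T.b ∈ Set.Icc 1 2 ∧ dist T.b T.c ∈ Set.Icc 1 2 ∧ dist T.a T.c ∈ Set.Icc 1 2 := by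
  have huv' : ‖u + v‖ = √2 := by
    rw [norm_add_eq_sqrt_iff_real_inner_eq_zero.2 huv, hu, hv]; norm_num
  simp only [rightTri]
  rw [dist_self_add_right, dist_self_add_right, add_assoc, dist_self_add_right, hu, hv, huv']
  refine ⟨by norm_num, by norm_num, ?_, ?_⟩
  · exact Real.one_le_sqrt.2 (by norm_num)
  · rw [Real.sqrt_le_left (by norm_num)]; norm_num

end RightTri

def lowerTri (k : ℕ) : Tri := ⟨pt k 0, pt (k + 1) 0, pt (k + 1) 1⟩

def upperTri (k : ℕ) : Tri := ⟨pt k 0, pt k 1, pt (k + 1) 1⟩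

lemma lowerTri_eq_rightTri (k : ℕ) : lowerTri k = rightTri (pt k 0) (pt 1 0) (pt 0 1) := by
  simp [lowerTri, rightTri]

lemma upperTri_eq_rightTri (k : ℕ) : upperTri k = rightTri (pt k 0) (pt 0 1) (pt 1 0) := by
  simp [upperTri, rightTri]

lemma lowerTri_carrier (k : ℕ) :
    (lowerTri k).carrier = {p | 0 ≤ p 1 ∧ p 1 ≤ p 0 - (k : ℝ) ∧ p 0 - (k : ℝ) ≤ 1} := by
  refine convexHull_triple_eq ?_ (by norm_num [lowerTri, add_comm])
    (by norm_num [lowerTri, add_comm]) (by norm_num [lowerTri, add_comm])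
    fun p ⟨h₁, h₂, h₃⟩ => ⟨k + 1 - p 0, p 0 - k - p 1, p 1, by linarith, by linarith, h₁,
      by ring, ?_⟩
  · rintro p ⟨h₁, h₂, h₃⟩ q ⟨g₁, g₂, g₃⟩ s t hs ht hst
    refine ⟨?_, ?_, ?_⟩ <;>
      (simp only [WithLp.ofLp_add, WithLp.ofLp_smul, Pi.add_apply, Pi.smul_apply, smul_eq_mul]
       nlinarith)
  · simp only [lowerTri, smul_pt, pt_add]
    rw [eq_comm, eq_pt_iff]
    constructor <;> ring

lemma upperTri_carrier (k : ℕ) :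
    (upperTri k).carrier = {p | 0 ≤ p 0 - (k : ℝ) ∧ p 0 - (k : ℝ) ≤ p 1 ∧ p 1 ≤ 1} := by
  refine convexHull_triple_eq ?_ (by norm_num [upperTri, add_comm])
    (by norm_num [upperTri, add_comm]) (by norm_num [upperTri, add_comm])
    fun p ⟨h₁, h₂, h₃⟩ => ⟨1 - p 1, p 1 - (p 0 - k), p 0 - k, by linarith, by linarith, h₁,
      by ring, ?_⟩
  · rintro p ⟨h₁, h₂, h₃⟩ q ⟨g₁, g₂, g₃⟩ s t hs ht hst
    refine ⟨?_, ?_, ?_⟩ <;>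
      (simp only [WithLp.ofLp_add, WithLp.ofLp_smul, Pi.add_apply, Pi.smul_apply, smul_eq_mul]
       nlinarith)
  · simp only [upperTri, smul_pt, pt_add]
    rw [eq_comm, eq_pt_iff]
    constructor <;> ring

lemma segment_pt_eq (x x' : ℝ) :
    segment ℝ (pt x 0) (pt x' 1) = {p | p 0 = x + (x' - x) * p 1 ∧ 0 ≤ p 1 ∧ p 1 ≤ 1} := by
  ext p
  rw [segment_eq_image']
  constructor
  · rintro ⟨θ, ⟨h₀, h₁⟩, rfl⟩
    simp [h₀, h₁, mul_comm]
  · rintro ⟨h, h₀, h₁⟩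
    refine ⟨p 1, ⟨h₀, h₁⟩, ?_⟩
    simp only [pt_sub, smul_pt, pt_add]
    rw [eq_comm, eq_pt_iff]
    exact ⟨by rw [h]; ring, by ring⟩

lemma Tri.MeetsProperly.symm {T T' : Tri} (h : T.MeetsProperly T') : T'.MeetsProperly T := by
  simpa only [Tri.MeetsProperly, Set.inter_comm] using h

lemma lowerTri_meetsProperly_lowerTri {j k : ℕ} (hjk : j < k) :
    (lowerTri j).MeetsProperly (lowerTri k) := by
  have hjk' : (j : ℝ) + 1 ≤ k := by exact_mod_cast hjk
  refine ⟨interior_inter_interior_eq_empty_of_inner_le (w := pt 1 0) (c := j + 1) (by simp) ?_ ?_,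
    ?_⟩
  · rw [lowerTri_carrier]; rintro p ⟨-, -, h⟩; simp only [inner_pt_left]; linarith
  · rw [lowerTri_carrier]; rintro p ⟨h₁, h₂, -⟩; simp only [inner_pt_left]; linarith
  obtain rfl | hjk : k = j + 1 ∨ j + 2 ≤ k := by omega
  · refine Or.inr (Or.inl ⟨pt (j + 1) 0, by simp [lowerTri, Tri.verts], ?_⟩)
    ext p
    simp only [lowerTri_carrier, Set.mem_inter_iff, Set.mem_ofPred_eq, Set.mem_singleton_iff,
      eq_pt_iff]
    push_cast
    constructor
    · rintro ⟨⟨h₁, h₂, h₃⟩, g₁, g₂, g₃⟩; constructor <;> linarith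
    · rintro ⟨h₁, h₂⟩; simp only [h₁, h₂]; norm_num
  · have : (j : ℝ) + 2 ≤ k := by exact_mod_cast hjk
    refine Or.inl (Set.eq_empty_of_forall_notMem fun p ⟨hp, hq⟩ => ?_)
    rw [lowerTri_carrier] at hp hq
    linarith [hp.2.2, hq.1, hq.2.1]

lemma upperTri_meetsProperly_upperTri {j k : ℕ} (hjk : j < k) :
    (upperTri j).MeetsProperly (upperTri k) := by
  have hjk' : (j : ℝ) + 1 ≤ k := by exact_mod_cast hjk
  refine ⟨interior_inter_interior_eq_empty_of_inner_le (w := pt 1 0) (c := j + 1) (by simp) ?_ ?_,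
    ?_⟩
  · rw [upperTri_carrier]; rintro p ⟨-, h₂, h₃⟩; simp only [inner_pt_left]; linarith
  · rw [upperTri_carrier]; rintro p ⟨h₁, -, -⟩; simp only [inner_pt_left]; linarith
  obtain rfl | hjk : k = j + 1 ∨ j + 2 ≤ k := by omega
  · refine Or.inr (Or.inl ⟨pt (j + 1) 1, by simp [upperTri, Tri.verts], ?_⟩)
    ext p
    simp only [upperTri_carrier, Set.mem_inter_iff, Set.mem_ofPred_eq, Set.mem_singleton_iff,
      eq_pt_iff]
    push_cast
    constructor
    · rintro ⟨⟨h₁, h₂, h₃⟩, g₁, g₂, g₃⟩; constructor <;> linarith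
    · rintro ⟨h₁, h₂⟩; simp only [h₁, h₂]; norm_num
  · have : (j : ℝ) + 2 ≤ k := by exact_mod_cast hjk
    refine Or.inl (Set.eq_empty_of_forall_notMem fun p ⟨hp, hq⟩ => ?_)
    rw [upperTri_carrier] at hp hq
    linarith [hp.2.1, hp.2.2, hq.1]

lemma lowerTri_meetsProperly_upperTri (j k : ℕ) : (lowerTri j).MeetsProperly (upperTri k) := by
  obtain hkj | rfl | rfl | hjk : k < j ∨ k = j ∨ k = j + 1 ∨ j + 2 ≤ k := by omega
  · have hkj' : (k : ℝ) + 1 ≤ j := by exact_mod_cast hkj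
    refine ⟨interior_inter_interior_eq_empty_of_inner_le (w := pt (-1) 0) (c := -j) (by simp)
      ?_ ?_, Or.inl (Set.eq_empty_of_forall_notMem fun p ⟨hp, hq⟩ => ?_)⟩
    · rw [lowerTri_carrier]; rintro p ⟨h₁, h₂, -⟩; simp only [inner_pt_left]; linarith
    · rw [upperTri_carrier]; rintro p ⟨-, h₂, h₃⟩; simp only [inner_pt_left]; linarith
    · rw [lowerTri_carrier] at hp; rw [upperTri_carrier] at hq
      linarith [hp.1, hp.2.1, hq.2.1]
  · refine ⟨interior_inter_interior_eq_empty_of_inner_le (w := pt (-1) 1) (c := -k) (by simp)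
      ?_ ?_, Or.inr (Or.inr ⟨segment ℝ (pt k 0) (pt (k + 1) 1),
        by simp [lowerTri, upperTri, Tri.edgeSegs], ?_⟩)⟩
    · rw [lowerTri_carrier]; rintro p ⟨-, h₂, -⟩; simp only [inner_pt_left]; linarith
    · rw [upperTri_carrier]; rintro p ⟨-, h₂, -⟩; simp only [inner_pt_left]; linarith
    · ext p
      simp only [lowerTri_carrier, upperTri_carrier, segment_pt_eq, Set.mem_inter_iff,
        Set.mem_ofPred_eq, add_sub_cancel_left, one_mul]
      constructor
      · rintro ⟨⟨h₁, h₂, h₃⟩, g₁, g₂, g₃⟩; refine ⟨by linarith, h₁, g₃⟩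
      · rintro ⟨h₁, h₂, h₃⟩; refine ⟨⟨h₂, ?_, ?_⟩, ?_, ?_, h₃⟩ <;> linarith
  · have hj : ((j + 1 : ℕ) : ℝ) = j + 1 := by push_cast; ring
    refine ⟨interior_inter_interior_eq_empty_of_inner_le (w := pt 1 0) (c := j + 1) (by simp)
      ?_ ?_, Or.inr (Or.inr ⟨segment ℝ (pt (j + 1) 0) (pt (j + 1) 1),
        by simp [lowerTri, upperTri, Tri.edgeSegs], ?_⟩)⟩
    · rw [lowerTri_carrier]; rintro p ⟨-, -, h₃⟩; simp only [inner_pt_left]; linarith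
    · rw [upperTri_carrier]; rintro p ⟨h₁, -, -⟩; simp only [inner_pt_left]; linarith
    · ext p
      simp only [lowerTri_carrier, upperTri_carrier, segment_pt_eq, Set.mem_inter_iff,
        Set.mem_ofPred_eq, hj, sub_self, zero_mul, add_zero]
      constructor
      · rintro ⟨⟨h₁, h₂, h₃⟩, g₁, g₂, g₃⟩; refine ⟨by linarith, h₁, g₃⟩
      · rintro ⟨h₁, h₂, h₃⟩; refine ⟨⟨h₂, ?_, ?_⟩, ?_, ?_, h₃⟩ <;> linarith
  · have hjk' : (j : ℝ) + 2 ≤ k := by exact_mod_cast hjk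
    refine ⟨interior_inter_interior_eq_empty_of_inner_le (w := pt 1 0) (c := j + 1) (by simp)
      ?_ ?_, Or.inl (Set.eq_empty_of_forall_notMem fun p ⟨hp, hq⟩ => ?_)⟩
    · rw [lowerTri_carrier]; rintro p ⟨-, -, h₃⟩; simp only [inner_pt_left]; linarith
    · rw [upperTri_carrier]; rintro p ⟨h₁, -, -⟩; simp only [inner_pt_left]; linarith
    · rw [lowerTri_carrier] at hp; rw [upperTri_carrier] at hq
      linarith [hp.2.2, hq.1]

def stripTris (a b : ℕ) : Set Tri := lowerTri '' Set.Iio a ∪ upperTri '' Set.Iio b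

lemma exists_rightTri_of_mem_stripTris {a b : ℕ} {T : Tri} (hT : T ∈ stripTris a b) :
    ∃ o u v : Pt, ‖u‖ = 1 ∧ ‖v‖ = 1 ∧ ⟪u, v⟫ = 0 ∧ T = rightTri o u v := by
  rcases hT with ⟨k, -, rfl⟩ | ⟨k, -, rfl⟩
  · exact ⟨_, _, _, norm_pt_one_zero, norm_pt_zero_one, by simp, lowerTri_eq_rightTri k⟩
  · exact ⟨_, _, _, norm_pt_zero_one, norm_pt_one_zero, by simp, upperTri_eq_rightTri k⟩

lemma meetsProperly_of_mem_stripTris {a b : ℕ} {T T' : Tri} (hT : T ∈ stripTris a b)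
    (hT' : T' ∈ stripTris a b) (hne : T ≠ T') : T.MeetsProperly T' := by
  rcases hT with ⟨j, -, rfl⟩ | ⟨j, -, rfl⟩ <;> rcases hT' with ⟨k, -, rfl⟩ | ⟨k, -, rfl⟩
  · rcases lt_trichotomy j k with h | rfl | h
    · exact lowerTri_meetsProperly_lowerTri h
    · exact absurd rfl hne
    · exact (lowerTri_meetsProperly_lowerTri h).symm
  · exact lowerTri_meetsProperly_upperTri j k
  · exact (lowerTri_meetsProperly_upperTri k j).symm
  · rcases lt_trichotomy j k with h | rfl | h
    · exact upperTri_meetsProperly_upperTri h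
    · exact absurd rfl hne
    · exact (upperTri_meetsProperly_upperTri h).symm

def stripMesh (a b : ℕ) (hb : 0 < b) : Mesh where
  tris := stripTris a b
  finite := ((Set.finite_Iio a).image _).union ((Set.finite_Iio b).image _)
  nonempty := ⟨upperTri 0, Or.inr ⟨0, hb, rfl⟩⟩
  nondeg T hT := by
    obtain ⟨o, u, v, hu, hv, huv, rfl⟩ := exists_rightTri_of_mem_stripTris hT
    exact rightTri_nondeg hu hv huv
  proper _ hT _ hT' hne := meetsProperly_of_mem_stripTris hT hT' hne

lemma stripMesh_fat (a b : ℕ) (hb : 0 < b) : (stripMesh a b hb).Fat (Real.pi / 4) := by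
  intro T hT
  obtain ⟨o, u, v, hu, hv, huv, rfl⟩ := exists_rightTri_of_mem_stripTris hT
  exact rightTri_fat hu hv huv

lemma stripMesh_edgesIn (a b : ℕ) (hb : 0 < b) : (stripMesh a b hb).EdgesIn 2 := by
  intro T hT
  obtain ⟨o, u, v, hu, hv, huv, rfl⟩ := exists_rightTri_of_mem_stripTris hT
  exact rightTri_dist hu hv huv

lemma stripMesh_verts {a b : ℕ} (hb : 0 < b) (hab : a ≤ b) (hba : b ≤ a + 1) :
    (stripMesh a b hb).verts =
      (fun j : ℕ => pt j 0) '' Set.Iic a ∪ (fun j : ℕ => pt j 1) '' Set.Iic b := by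
  apply subset_antisymm
  · simp only [Mesh.verts, Set.iUnion_subset_iff]
    rintro T (⟨k, hk, rfl⟩ | ⟨k, hk, rfl⟩) p (rfl | rfl | rfl) <;> simp only [Set.mem_Iio] at hk
    · exact Or.inl ⟨k, Set.mem_Iic.2 (by omega), rfl⟩
    · exact Or.inl ⟨k + 1, Set.mem_Iic.2 (by omega), by simp [lowerTri]⟩
    · exact Or.inr ⟨k + 1, Set.mem_Iic.2 (by omega), by simp [lowerTri]⟩
    · exact Or.inl ⟨k, Set.mem_Iic.2 (by omega), rfl⟩
    · exact Or.inr ⟨k, Set.mem_Iic.2 (by omega), rfl⟩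
    · exact Or.inr ⟨k + 1, Set.mem_Iic.2 (by omega), by simp [upperTri]⟩
  · have mem {T : Tri} {p : Pt} (hT : T ∈ stripTris a b) (hp : p ∈ T.verts) :
        p ∈ (stripMesh a b hb).verts :=
      Set.mem_biUnion hT hp
    rintro p (⟨j, hj, rfl⟩ | ⟨j, hj, rfl⟩) <;> simp only [Set.mem_Iic] at hj
    · by_cases hjb : j < b
      · exact mem (Or.inr ⟨j, hjb, rfl⟩) (Or.inl rfl)
      · obtain ⟨i, rfl⟩ : ∃ i, j = i + 1 := ⟨j - 1, by omega⟩
        exact mem (Or.inl ⟨i, Set.mem_Iio.2 (by omega), rfl⟩) (Or.inr (Or.inl (by simp [lowerTri])))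
    · by_cases hjb : j < b
      · exact mem (Or.inr ⟨j, hjb, rfl⟩) (Or.inr (Or.inl rfl))
      · obtain ⟨i, rfl⟩ : ∃ i, j = i + 1 := ⟨j - 1, by omega⟩
        exact mem (Or.inr ⟨i, Set.mem_Iio.2 (by omega), rfl⟩) (Or.inr (Or.inr (by simp [upperTri])))

lemma ncard_stripMesh_verts {a b : ℕ} (hb : 0 < b) (hab : a ≤ b) (hba : b ≤ a + 1) :
    (stripMesh a b hb).verts.ncard = (a + 1) + (b + 1) := by
  have row_ncard (y : ℝ) (m : ℕ) : ((fun j : ℕ => pt j y) '' Set.Iic m).ncard = m + 1 := by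
    rw [Set.ncard_image_of_injective _ fun i j h => by simpa using h, ← Finset.coe_Iic,
      Set.ncard_coe_finset, Nat.card_Iic]
  rw [stripMesh_verts hb hab hba, Set.ncard_union_eq, row_ncard, row_ncard]
  rw [Set.disjoint_left]
  rintro _ ⟨i, -, rfl⟩ ⟨j, -, h⟩
  simp at h

def stripRect (k m : ℕ) : Set Pt := {p | (k : ℝ) ≤ p 0 ∧ p 0 ≤ m + 1 ∧ 0 ≤ p 1 ∧ p 1 ≤ 1}

lemma convex_stripRect (k m : ℕ) : Convex ℝ (stripRect k m) := by
  rintro p ⟨h₁, h₂, h₃, h₄⟩ q ⟨g₁, g₂, g₃, g₄⟩ s t hs ht hst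
  refine ⟨?_, ?_, ?_, ?_⟩ <;>
    (simp only [WithLp.ofLp_add, WithLp.ofLp_smul, Pi.add_apply, Pi.smul_apply, smul_eq_mul]
     nlinarith)

lemma stripRect_eq_biUnion {k m : ℕ} (hkm : k ≤ m) :
    stripRect k m = ⋃ T ∈ lowerTri '' Set.Icc k m ∪ upperTri '' Set.Icc k m, T.carrier := by
  apply subset_antisymm
  · rintro p ⟨h₁, h₂, h₃, h₄⟩
    -- the unit square containing `p`; the `min` catches the right edge `p 0 = m + 1`
    set j := min m ⌊p 0⌋₊
    have hj : k ≤ j ∧ j ≤ m := ⟨le_min hkm (Nat.le_floor h₁), min_le_left _ _⟩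
    have hj₁ : (j : ℝ) ≤ p 0 :=
      (Nat.cast_le.2 (min_le_right _ _)).trans (Nat.floor_le ((Nat.cast_nonneg k).trans h₁))
    have hj₂ : p 0 ≤ j + 1 := by
      rcases le_total m ⌊p 0⌋₊ with h | h
      · simpa [j, h] using h₂
      · simpa [j, h] using (Nat.lt_floor_add_one (p 0)).le
    simp only [Set.mem_iUnion]
    by_cases hy : p 1 ≤ p 0 - j
    · exact ⟨lowerTri j, Or.inl ⟨j, hj, rfl⟩, by rw [lowerTri_carrier]; exact ⟨h₃, hy, by linarith⟩⟩
    · exact ⟨upperTri j, Or.inr ⟨j, hj, rfl⟩,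
        by rw [upperTri_carrier]; exact ⟨by linarith, by linarith, h₄⟩⟩
  · simp only [Set.iUnion_subset_iff]
    rintro T (⟨j, ⟨hkj, hjm⟩, rfl⟩ | ⟨j, ⟨hkj, hjm⟩, rfl⟩) p hp
    all_goals
      have hkj' : (k : ℝ) ≤ j := by exact_mod_cast hkj
      have hjm' : (j : ℝ) ≤ m := by exact_mod_cast hjm
    · rw [lowerTri_carrier] at hp
      obtain ⟨h₁, h₂, h₃⟩ := hp
      exact ⟨by linarith, by linarith, h₁, by linarith⟩
    · rw [upperTri_carrier] at hp
      obtain ⟨h₁, h₂, h₃⟩ := hp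
      exact ⟨by linarith, by linarith, by linarith, h₃⟩

lemma interior_stripRect_subset (k m : ℕ) : interior (stripRect k m) ⊆ {p | 0 < p 1 ∧ p 1 < 1} := by
  intro p hp
  have h₀ : ⟪pt 0 (-1), p⟫ < 0 := interior_subset_setOf_inner_lt (s := stripRect k m)
    (by simp) (fun q ⟨_, _, hq, _⟩ => by simpa using hq) hp
  have h₁ : ⟪pt 0 1, p⟫ < 1 := interior_subset_setOf_inner_lt (s := stripRect k m)
    (by simp) (fun q ⟨_, _, _, hq⟩ => by simpa using hq) hp
  simp only [inner_pt_left] at h₀ h₁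
  constructor <;> linarith

lemma stripMesh_verts_apply_one {a b : ℕ} (hb : 0 < b) {p : Pt}
    (hp : p ∈ (stripMesh a b hb).verts) : p 1 = 0 ∨ p 1 = 1 := by
  simp only [Mesh.verts, Set.mem_iUnion] at hp
  obtain ⟨T, (⟨k, -, rfl⟩ | ⟨k, -, rfl⟩), hp⟩ := hp <;>
    rcases hp with rfl | rfl | rfl <;> simp [lowerTri, upperTri]

lemma stripRect_isCarrot {a b k m : ℕ} (hb : 0 < b) (hab : a ≤ b) (hkm : k ≤ m) (hma : m < a) :
    (stripMesh a b hb).IsCarrot (stripRect k m) := by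
  refine ⟨⟨lowerTri '' Set.Icc k m ∪ upperTri '' Set.Icc k m, ?_,
    ⟨lowerTri k, Or.inl ⟨k, ⟨le_rfl, hkm⟩, rfl⟩⟩, stripRect_eq_biUnion hkm, convex_stripRect k m⟩,
    fun v hv hvint => ?_⟩
  · rintro T (⟨j, ⟨-, hj⟩, rfl⟩ | ⟨j, ⟨-, hj⟩, rfl⟩)
    · exact Or.inl ⟨j, Set.mem_Iio.2 (by omega), rfl⟩
    · exact Or.inr ⟨j, Set.mem_Iio.2 (by omega), rfl⟩
  · obtain ⟨h₀, h₁⟩ := interior_stripRect_subset k m hvint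
    rcases stripMesh_verts_apply_one hb hv with h | h <;> linarith

lemma le_of_stripRect_subset {k m k' m' : ℕ} (hkm : k ≤ m) (h : stripRect k m ⊆ stripRect k' m') :
    k' ≤ k ∧ m ≤ m' := by
  have hkm' : (k : ℝ) ≤ m := by exact_mod_cast hkm
  obtain ⟨hk, -⟩ := h (show pt k 0 ∈ stripRect k m from
    ⟨le_rfl, by simp only [pt_apply_zero]; linarith, le_rfl, zero_le_one⟩)
  obtain ⟨-, hm, -⟩ := h (show pt (m + 1) 0 ∈ stripRect k m from
    ⟨by simp only [pt_apply_zero]; linarith, le_rfl, le_rfl, zero_le_one⟩)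
  simp only [pt_apply_zero] at hk hm
  exact ⟨by exact_mod_cast hk, by exact_mod_cast (by linarith : (m : ℝ) ≤ m')⟩

lemma Mesh.finite_setOf_isCarrot (M : Mesh) : {P | M.IsCarrot P}.Finite :=
  (M.finite.finite_subsets.image fun S => ⋃ T ∈ S, T.carrier).subset
    fun _ ⟨⟨S, hS, _, hP, _⟩, _⟩ => ⟨S, hS, hP.symm⟩

lemma le_ncard_setOf_isCarrot_stripMesh {a b : ℕ} (hb : 0 < b) (hab : a ≤ b) (h : ℕ) :
    h * (a - h) ≤ {P | (stripMesh a b hb).IsCarrot P}.ncard := by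
  have hcard : (↑(Finset.range h ×ˢ Finset.Ico h a) : Set (ℕ × ℕ)).ncard = h * (a - h) := by
    rw [Set.ncard_coe_finset, Finset.card_product, Finset.card_range, Nat.card_Ico]
  rw [← hcard]
  refine Set.ncard_le_ncard_of_injOn (fun q => stripRect q.1 q.2) ?_ ?_
    (Mesh.finite_setOf_isCarrot _)
  · rintro ⟨k, m⟩ hq
    simp only [Finset.coe_product, Set.mem_prod, Finset.coe_range, Set.mem_Iio, Finset.coe_Ico,
      Set.mem_Ico] at hq
    exact stripRect_isCarrot hb hab (by omega) hq.2.2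
  · rintro ⟨k, m⟩ hq ⟨k', m'⟩ hq' hkm
    simp only [Finset.coe_product, Set.mem_prod, Finset.coe_range, Set.mem_Iio, Finset.coe_Ico,
      Set.mem_Ico] at hq hq'
    obtain ⟨h₁, h₂⟩ := le_of_stripRect_subset (by omega) hkm.le
    obtain ⟨h₃, h₄⟩ := le_of_stripRect_subset (by omega) hkm.ge
    exact Prod.ext (by omega) (by omega)

/-- There are constants `δ ∈ (0, 2π/3]`, `ρ ≥ 1`, `c > 0` and a threshold `n₀`
such that for every `n ≥ n₀` there is a `δ`-fat mesh with `n` vertices and all edge lengths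
in `[1, ρ]` having at least `c · n²` carrots respecting it. -/
theorem many_carrots_in_compact_fat_meshes :
    ∃ δ : ℝ, δ ∈ Set.Ioc 0 (2 * Real.pi / 3) ∧ ∃ ρ : ℝ, 1 ≤ ρ ∧ ∃ c : ℝ, 0 < c ∧
      ∃ n₀ : ℕ, ∀ n : ℕ, n₀ ≤ n →
        ∃ M : Mesh, M.Fat δ ∧ M.EdgesIn ρ ∧ M.verts.ncard = n ∧
          c * (n : ℝ) ^ 2 ≤ ({P : Set Pt | M.IsCarrot P}.ncard : ℝ) := by
  refine ⟨Real.pi / 4, ⟨by positivity, by linarith [Real.pi_pos]⟩, 2, by norm_num, 1 / 64,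
    by norm_num, 10, fun n hn => ?_⟩
  -- a strip of `n - 2` triangles, `(n - 2) / 2` lower and `(n - 1) / 2` upper ones
  have hb : 0 < (n - 1) / 2 := by omega
  have hab : (n - 2) / 2 ≤ (n - 1) / 2 := by omega
  refine ⟨stripMesh ((n - 2) / 2) _ hb, stripMesh_fat _ _ hb, stripMesh_edgesIn _ _ hb, ?_, ?_⟩
  · rw [ncard_stripMesh_verts hb hab (by omega)]
    omega
  · set a := (n - 2) / 2
    have hcount := le_ncard_setOf_isCarrot_stripMesh hb hab (a / 2)
    have hsq : n * n ≤ 8 * (a / 2) * (8 * (a - a / 2)) :=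
      Nat.mul_le_mul (by omega) (by omega)
    have : (n : ℝ) * n ≤ 64 * ((a / 2 * (a - a / 2) : ℕ) : ℝ) := by
      exact_mod_cast (show n * n ≤ 64 * (a / 2 * (a - a / 2)) by linarith)
    nlinarith [(Nat.cast_le (α := ℝ)).2 hcount]
end
end
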